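/- arXiv:2601.09406 — 9 statements merged into one kernel-verified Lean document; each statement's English description precedes it below -/
import Mathlib

section
/- Let X be a finite nonempty set, let q ∈ (0,1) ∪ (1,∞), let p be a probability distribution on X, and let r be a strictly positive probability distribution on X. Then ∑_{x∈X} p(x) · ln_q(r(x)) ≤ ((∑_{x∈X} p(x)^{1/q})^q − 1)/(1 − q). -/
open Real BigOperators Finset

/-! With `z x = p x ^ (1/q) / r x` one has `∑ r z = ∑ p ^ (1/q)` and `∑ r z ^ q = ∑ p r ^ (1-q)`,
so the inequality is the power mean inequality for `z` with weights `r`: concave Jensen for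
`t ↦ t ^ q` when `q < 1`, convex Jensen when `q > 1`; the sign of `1 - q` matches the direction. -/

theorem Real.arith_mean_rpow_le_rpow_arith_mean {ι : Type*} (s : Finset ι) (w z : ι → ℝ)
    (hw : ∀ i ∈ s, 0 ≤ w i) (hw' : ∑ i ∈ s, w i = 1) (hz : ∀ i ∈ s, 0 ≤ z i) {p : ℝ}
    (hp₀ : 0 ≤ p) (hp₁ : p ≤ 1) :
    ∑ i ∈ s, w i * z i ^ p ≤ (∑ i ∈ s, w i * z i) ^ p := by
  simpa only [smul_eq_mul] using (concaveOn_rpow hp₀ hp₁).le_map_sum hw hw' hz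

lemma mul_div_rpow_eq_mul_rpow_one_sub {a b q : ℝ} (ha : 0 ≤ a) (hb : 0 < b) (hq : q ≠ 0) :
    b * (a ^ (1 / q) / b) ^ q = a * b ^ (1 - q) := by
  rw [div_rpow (rpow_nonneg ha _) hb.le, ← rpow_mul ha, one_div_mul_cancel hq, rpow_one,
    rpow_sub hb, rpow_one]
  field_simp

section PowerMean

variable {ι : Type*} {s : Finset ι} {p r : ι → ℝ} {q : ℝ}

lemma sum_mul_div_self (f : ι → ℝ) (hr : ∀ i ∈ s, 0 < r i) :
    ∑ i ∈ s, r i * (f i / r i) = ∑ i ∈ s, f i :=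
  sum_congr rfl fun i hi => mul_div_cancel₀ _ (hr i hi).ne'

lemma sum_mul_rpow_one_sub_le_of_lt_one (hp : ∀ i ∈ s, 0 ≤ p i) (hr : ∀ i ∈ s, 0 < r i)
    (hr1 : ∑ i ∈ s, r i = 1) (hq₀ : 0 < q) (hq₁ : q < 1) :
    ∑ i ∈ s, p i * r i ^ (1 - q) ≤ (∑ i ∈ s, p i ^ (1 / q)) ^ q := by
  have h := arith_mean_rpow_le_rpow_arith_mean s r (fun i => p i ^ (1 / q) / r i)
    (fun i hi => (hr i hi).le) hr1
    (fun i hi => div_nonneg (rpow_nonneg (hp i hi) _) (hr i hi).le) hq₀.le hq₁.le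
  rwa [sum_congr rfl fun i hi => mul_div_rpow_eq_mul_rpow_one_sub (hp i hi) (hr i hi) hq₀.ne',
    sum_mul_div_self _ hr] at h

lemma rpow_sum_rpow_inv_le_sum_mul_rpow_one_sub (hp : ∀ i ∈ s, 0 ≤ p i) (hr : ∀ i ∈ s, 0 < r i)
    (hr1 : ∑ i ∈ s, r i = 1) (hq : 1 < q) :
    (∑ i ∈ s, p i ^ (1 / q)) ^ q ≤ ∑ i ∈ s, p i * r i ^ (1 - q) := by
  have h := rpow_arith_mean_le_arith_mean_rpow s r (fun i => p i ^ (1 / q) / r i)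
    (fun i hi => (hr i hi).le) hr1
    (fun i hi => div_nonneg (rpow_nonneg (hp i hi) _) (hr i hi).le) hq.le
  rwa [sum_congr rfl fun i hi => mul_div_rpow_eq_mul_rpow_one_sub (hp i hi) (hr i hi)
    (by positivity), sum_mul_div_self _ hr] at h

end PowerMean

lemma sum_mul_sub_one_div {ι : Type*} {s : Finset ι} {p : ι → ℝ} (f : ι → ℝ) (c : ℝ)
    (hp1 : ∑ i ∈ s, p i = 1) :
    ∑ i ∈ s, p i * ((f i - 1) / c) = (∑ i ∈ s, p i * f i - 1) / c := by
  simp only [mul_div_assoc', mul_sub, mul_one, ← sum_div, sum_sub_distrib, hp1]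

theorem generalized_gibbs_inequality_general
    {X : Type*} [Fintype X]
    (q : ℝ) (hq0 : 0 < q) (hq1 : q ≠ 1)
    (p : X → ℝ) (hp : ∀ x, 0 ≤ p x) (hp1 : (∑ x, p x) = 1)
    (r : X → ℝ) (hr : ∀ x, 0 < r x) (hr1 : (∑ x, r x) = 1) :
    (∑ x, p x * ((r x ^ (1 - q) - 1) / (1 - q)))
      ≤ ((∑ x, p x ^ (1 / q)) ^ q - 1) / (1 - q) := by
  rw [sum_mul_sub_one_div _ _ hp1]
  rcases hq1.lt_or_gt with hq | hq
  · have h := sum_mul_rpow_one_sub_le_of_lt_one (fun x _ => hp x) (fun x _ => hr x) hr1 hq0 hq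
    exact div_le_div_of_nonneg_right (by linarith) (by linarith)
  · have h := rpow_sum_rpow_inv_le_sum_mul_rpow_one_sub (fun x _ => hp x) (fun x _ => hr x) hr1 hq
    exact div_le_div_of_nonpos_of_le (by linarith) (by linarith)

/-- Generalized Gibbs inequality (upper bound): for a probability distribution `p`
and a strictly positive probability distribution `r` on a finite nonempty set `X`,
and `q ∈ (0,1) ∪ (1,∞)`,
`∑ x, p x * ln_q (r x) ≤ ((∑ x, p x ^ (1/q)) ^ q − 1)/(1 − q)`. -/
theorem generalized_gibbs_inequality
    {X : Type*} [Fintype X] [Nonempty X]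
    (q : ℝ) (hq0 : 0 < q) (hq1 : q ≠ 1)
    (p : X → ℝ) (hp : ∀ x, 0 ≤ p x) (hp1 : (∑ x, p x) = 1)
    (r : X → ℝ) (hr : ∀ x, 0 < r x) (hr1 : (∑ x, r x) = 1) :
    (∑ x, p x * ((r x ^ (1 - q) - 1) / (1 - q)))
      ≤ ((∑ x, p x ^ (1 / q)) ^ q - 1) / (1 - q) :=
  generalized_gibbs_inequality_general q hq0 hq1 p hp hp1 r hr hr1
end

section
/- Let X be a finite nonempty set, let q ∈ (0,1) ∪ (1,∞), and let p be a probability distribution on X with ∑_{x} p(x)^{1/q} > 0. Define the (1/q)-tilted distribution r*(x) = p(x)^{1/q} / ∑_{x'∈X} p(x')^{1/q}. Then ∑_{x∈X} p(x) · ln_q(r*(x)) = ((∑_{x∈X} p(x)^{1/q})^q − 1)/(1 − q); that is, the upper bound in the generalized Gibbs inequality is attained at the (1/q)-tilted distribution of p. -/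
open Real BigOperators Finset

/-! The weights `p x * r*(x)^(1-q)` collapse: `p x * (p x^(1/q))^(1-q) = p x^(1/q)`, so their sum
is `S * S^(q-1) = S^q` with `S = ∑ x, p x^(1/q)`. Since `ln_q` is affine in `t^(1-q)` and `p` sums
to one, the left-hand side is `(S^q - 1)/(1 - q)`. -/

namespace Real

lemma mul_rpow_one_div_rpow_one_sub {a q : ℝ} (ha : 0 ≤ a) (hq : q ≠ 0) :
    a * (a ^ (1 / q)) ^ (1 - q) = a ^ (1 / q) := by
  rcases ha.eq_or_lt with rfl | ha
  · simp [hq]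
  · rw [← rpow_mul ha.le, mul_comm, ← rpow_add_one ha.ne']
    congr 1
    field_simp
    ring

lemma div_rpow_one_sub_self {a : ℝ} (ha : 0 < a) (q : ℝ) : a / a ^ (1 - q) = a ^ q := by
  nth_rewrite 1 [← rpow_one a]
  rw [← rpow_sub ha, sub_sub_cancel]

end Real

section Tilted

variable {X : Type*} [Fintype X]

lemma sum_mul_div_one_sub_eq (p r : X → ℝ) (q : ℝ) :
    ∑ x, p x * ((r x ^ (1 - q) - 1) / (1 - q)) =
      ((∑ x, p x * r x ^ (1 - q)) - ∑ x, p x) / (1 - q) := by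
  simp only [mul_div_assoc', mul_sub, mul_one, ← sum_div, sum_sub_distrib]

lemma sum_mul_tilted_rpow_one_sub {q : ℝ} (hq : q ≠ 0) {p : X → ℝ} (hp : ∀ x, 0 ≤ p x)
    (hS : 0 < ∑ x, p x ^ (1 / q)) :
    ∑ x, p x * (p x ^ (1 / q) / ∑ x', p x' ^ (1 / q)) ^ (1 - q) =
      (∑ x, p x ^ (1 / q)) ^ q := by
  set S := ∑ x, p x ^ (1 / q)
  calc ∑ x, p x * (p x ^ (1 / q) / S) ^ (1 - q)
      = ∑ x, p x * (p x ^ (1 / q)) ^ (1 - q) / S ^ (1 - q) := by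
        simp only [div_rpow (rpow_nonneg (hp _) _) hS.le, mul_div_assoc]
    _ = S / S ^ (1 - q) := by
        simp only [mul_rpow_one_div_rpow_one_sub (hp _) hq, ← sum_div, S]
    _ = S ^ q := div_rpow_one_sub_self hS q

end Tilted

theorem generalized_gibbs_equality_at_tilted_general
    {X : Type*} [Fintype X]
    (q : ℝ) (hq0 : 0 < q)
    (p : X → ℝ) (hp : ∀ x, 0 ≤ p x) (hp1 : (∑ x, p x) = 1)
    (hps : 0 < ∑ x, p x ^ (1 / q))
    (rstar : X → ℝ)
    (hrstar : ∀ x, rstar x = p x ^ (1 / q) / ∑ x', p x' ^ (1 / q)) :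
    (∑ x, p x * ((rstar x ^ (1 - q) - 1) / (1 - q)))
      = ((∑ x, p x ^ (1 / q)) ^ q - 1) / (1 - q) := by
  rw [sum_mul_div_one_sub_eq, funext hrstar, sum_mul_tilted_rpow_one_sub hq0.ne' hp hps, hp1]

/-- The upper bound in the generalized Gibbs inequality is attained at the
`(1/q)`-tilted distribution of `p`. -/
theorem generalized_gibbs_equality_at_tilted
    {X : Type*} [Fintype X] [Nonempty X]
    (q : ℝ) (hq0 : 0 < q) (hq1 : q ≠ 1)
    (p : X → ℝ) (hp : ∀ x, 0 ≤ p x) (hp1 : (∑ x, p x) = 1)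
    (hps : 0 < ∑ x, p x ^ (1 / q))
    (rstar : X → ℝ)
    (hrstar : ∀ x, rstar x = p x ^ (1 / q) / ∑ x', p x' ^ (1 / q)) :
    (∑ x, p x * ((rstar x ^ (1 - q) - 1) / (1 - q)))
      = ((∑ x, p x ^ (1 / q)) ^ q - 1) / (1 - q) :=
  generalized_gibbs_equality_at_tilted_general q hq0 p hp hp1 hps rstar hrstar
end

section
/- Let X, Y, A be finite nonempty sets, let p be a probability distribution on X × Y, let g : X × A → ℝ be a gain function, and let φ : ℝ → ℝ be a strictly increasing bijection. Then the generalized conditional vulnerability with φ = ψ decomposes as a posterior optimization: max over decision rules δ : Y → A of φ⁻¹(∑_{x,y} p(x,y) · φ(g(x, δ(y)))) = φ⁻¹(∑_{y∈Y} max_{a∈A} ∑_{x∈X} p(x,y) · φ(g(x,a))). -/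
open Real BigOperators Finset

/-- For a strictly increasing bijection `φ`, the generalized conditional vulnerability
decomposes as a posterior optimization:
`max_δ φ⁻¹(∑_{x,y} p(x,y) φ(g(x, δ y))) = φ⁻¹(∑_y max_a ∑_x p(x,y) φ(g(x,a)))`. -/
theorem generalized_conditional_vulnerability_decomposition_increasing
    {X Y A : Type*} [Fintype X] [Fintype Y] [Fintype A]
    [Nonempty X] [Nonempty Y] [Nonempty A]
    (p : X × Y → ℝ) (hp : ∀ z, 0 ≤ p z) (hp1 : (∑ z, p z) = 1)
    (g : X × A → ℝ)
    (φ : ℝ → ℝ) (hφ : StrictMono φ) (hφb : Function.Bijective φ) :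
    (⨆ δ : Y → A,
        Function.invFun φ (∑ z : X × Y, p z * φ (g (z.1, δ z.2))))
      = Function.invFun φ (∑ y, ⨆ a : A, ∑ x, p (x, y) * φ (g (x, a))) := by
  classical
  set f : Y → A → ℝ := fun y a => ∑ x, p (x, y) * φ (g (x, a)) with hf
  have hinv : Function.RightInverse (Function.invFun φ) φ :=
    Function.rightInverse_invFun hφb.2
  have hmono : Monotone (Function.invFun φ) := by
    intro u v huv
    rw [← hφ.le_iff_le, hinv u, hinv v]; exact huv
  have hex : ∀ y, ∃ a : A, ∀ b, f y b ≤ f y a := fun y => Finite.exists_max (f y)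
  choose δs hδs using hex
  have hsup : ∀ y, (⨆ a, f y a) = f y (δs y) := fun y =>
    le_antisymm (ciSup_le (hδs y))
      (le_ciSup (Set.Finite.bddAbove (Set.finite_range _)) _)
  have hSF : ∀ δ : Y → A,
      (∑ z : X × Y, p z * φ (g (z.1, δ z.2))) = ∑ y, f y (δ y) := by
    intro δ
    rw [Fintype.sum_prod_type_right]
  have hle : ∀ δ : Y → A, (∑ z : X × Y, p z * φ (g (z.1, δ z.2)))
      ≤ ∑ y, ⨆ a, f y a := by
    intro δ
    rw [hSF δ]
    exact Finset.sum_le_sum fun y _ => (hsup y).symm ▸ hδs y (δ y)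
  have heq : (∑ z : X × Y, p z * φ (g (z.1, δs z.2))) = ∑ y, ⨆ a, f y a := by
    rw [hSF δs]
    exact (Finset.sum_congr rfl fun y _ => (hsup y)).symm
  refine le_antisymm (ciSup_le fun δ => hmono (hle δ)) ?_
  rw [← heq]
  exact le_ciSup (f := fun δ : Y → A => Function.invFun φ (∑ z : X × Y, p z * φ (g (z.1, δ z.2)))) (Set.Finite.bddAbove (Set.finite_range _)) δs
end

section
/- Let X be a finite nonempty set, let α > 1, and let p be a probability distribution on X. Then the supremum over all strictly positive probability distributions r on X of the expected power score ∑_{x∈X} p(x) · (α · r(x)^{α−1} + (1−α) · ∑_{x'∈X} r(x')^α) equals ∑_{x∈X} p(x)^α. -/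
open Real BigOperators Finset

/-!
Since `∑ p = 1`, the expected score of `r` is `α ∑ p r^(α-1) - (α-1) ∑ r^α`, and Young's
inequality `α p r^(α-1) ≤ p^α + (α-1) r^α` bounds it by `∑ p^α`, with equality at `r = p`.
The value at `p` is a limit of values at strictly positive distributions, because the
expected score is continuous in `r` and every distribution lies in the closure of the
strictly positive ones.
-/

section PowerScore

variable {X : Type*} [Fintype X]

noncomputable def powerScore (α : ℝ) (r : X → ℝ) (x : X) : ℝ :=
  α * r x ^ (α - 1) + (1 - α) * ∑ x', r x' ^ α

lemma Real.mul_mul_rpow_sub_one_le {α p r : ℝ} (hα : 1 < α) (hp : 0 ≤ p) (hr : 0 ≤ r) :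
    α * (p * r ^ (α - 1)) ≤ p ^ α + (α - 1) * r ^ α := by
  have hconj := Real.HolderConjugate.conjExponent hα
  have hpow : (r ^ (α - 1)) ^ α.conjExponent = r ^ α := by
    rw [← Real.rpow_mul hr, Real.conjExponent, mul_div_cancel₀ _ (by linarith)]
  have hyoung := Real.young_inequality_of_nonneg hp (Real.rpow_nonneg hr (α - 1)) hconj
  rw [hpow, Real.conjExponent, div_div_eq_mul_div] at hyoung
  have hα0 : 0 < α := by linarith
  calc α * (p * r ^ (α - 1)) ≤ α * (p ^ α / α + r ^ α * (α - 1) / α) := by gcongr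
    _ = p ^ α + (α - 1) * r ^ α := by field_simp

lemma Real.mul_rpow_sub_one_self {α p : ℝ} (hα : α ≠ 0) (hp : 0 ≤ p) :
    p * p ^ (α - 1) = p ^ α := by
  rw [← Real.rpow_one_add' hp (by rwa [add_sub_cancel]), add_sub_cancel]

lemma sum_mul_powerScore {α : ℝ} {p : X → ℝ} (hp1 : ∑ x, p x = 1) (r : X → ℝ) :
    ∑ x, p x * powerScore α r x
      = α * ∑ x, p x * r x ^ (α - 1) - (α - 1) * ∑ x, r x ^ α := by
  simp only [powerScore, mul_add, Finset.sum_add_distrib, ← Finset.sum_mul, hp1,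
    mul_left_comm (p _) α, ← Finset.mul_sum]
  ring

lemma sum_mul_powerScore_le {α : ℝ} (hα : 1 < α) {p r : X → ℝ} (hp : ∀ x, 0 ≤ p x)
    (hp1 : ∑ x, p x = 1) (hr : ∀ x, 0 ≤ r x) :
    ∑ x, p x * powerScore α r x ≤ ∑ x, p x ^ α := by
  have hyoung : ∑ x, α * (p x * r x ^ (α - 1)) ≤ ∑ x, (p x ^ α + (α - 1) * r x ^ α) :=
    Finset.sum_le_sum fun x _ => Real.mul_mul_rpow_sub_one_le hα (hp x) (hr x)
  rw [sum_mul_powerScore hp1]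
  rw [← Finset.mul_sum, Finset.sum_add_distrib, ← Finset.mul_sum] at hyoung
  linarith

lemma sum_mul_powerScore_self {α : ℝ} (hα : α ≠ 0) {p : X → ℝ} (hp : ∀ x, 0 ≤ p x)
    (hp1 : ∑ x, p x = 1) :
    ∑ x, p x * powerScore α p x = ∑ x, p x ^ α := by
  simp only [sum_mul_powerScore hp1, Real.mul_rpow_sub_one_self hα (hp _)]
  ring

lemma continuous_sum_mul_powerScore {α : ℝ} (hα : 1 ≤ α) (p : X → ℝ) :
    Continuous fun r : X → ℝ => ∑ x, p x * powerScore α r x := by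
  have hα1 : 0 ≤ α - 1 := by linarith
  have hα0 : 0 ≤ α := by linarith
  unfold powerScore
  fun_prop (disch := assumption)

end PowerScore

lemma stdSimplex_subset_closure_setOf_pos {X : Type*} [Fintype X] [Nonempty X] :
    stdSimplex ℝ X ⊆ closure {r : X → ℝ | (∀ x, 0 < r x) ∧ ∑ x, r x = 1} := by
  intro p ⟨hp, hp1⟩
  set u : X → ℝ := fun _ => (Fintype.card X : ℝ)⁻¹
  have hu : ∀ x, 0 < u x := fun _ => by positivity
  have hu1 : ∑ x, u x = 1 := by simp [u]
  have hsegment : openSegment ℝ p u ⊆ {r | (∀ x, 0 < r x) ∧ ∑ x, r x = 1} := by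
    rintro _ ⟨a, b, ha, hb, hab, rfl⟩
    refine ⟨fun x => ?_, ?_⟩
    · have hpx := hp x
      have hux := hu x
      simp only [Pi.add_apply, Pi.smul_apply, smul_eq_mul]
      positivity
    · simp only [Pi.add_apply, Pi.smul_apply, smul_eq_mul, Finset.sum_add_distrib,
        ← Finset.mul_sum, hp1, hu1]
      linear_combination hab
  exact closure_mono hsegment (segment_subset_closure_openSegment (left_mem_segment ℝ p u))

/-- For `α > 1`, the supremum over strictly positive distributions `r` of the expected
power score equals `∑ x, p x ^ α`. -/
theorem power_score_sup
    {X : Type*} [Fintype X] [Nonempty X]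
    (α : ℝ) (hα : 1 < α)
    (p : X → ℝ) (hp : ∀ x, 0 ≤ p x) (hp1 : (∑ x, p x) = 1) :
    sSup {v : ℝ | ∃ r : X → ℝ, (∀ x, 0 < r x) ∧ (∑ x, r x) = 1 ∧
        v = ∑ x, p x * (α * r x ^ (α - 1) + (1 - α) * ∑ x', r x' ^ α)}
      = ∑ x, p x ^ α := by
  set S := {v : ℝ | ∃ r : X → ℝ, (∀ x, 0 < r x) ∧ (∑ x, r x) = 1 ∧
      v = ∑ x, p x * (α * r x ^ (α - 1) + (1 - α) * ∑ x', r x' ^ α)}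
  have hupper : ∑ x, p x ^ α ∈ upperBounds S := by
    rintro _ ⟨r, hr, -, rfl⟩
    exact sum_mul_powerScore_le hα hp hp1 fun x => (hr x).le
  have hmaps : Set.MapsTo (fun r => ∑ x, p x * powerScore α r x)
      {r : X → ℝ | (∀ x, 0 < r x) ∧ ∑ x, r x = 1} S :=
    fun r hr => ⟨r, hr.1, hr.2, rfl⟩
  have hclosure : ∑ x, p x ^ α ∈ closure S := by
    rw [← sum_mul_powerScore_self (by positivity) hp hp1]
    exact map_mem_closure (x := p) (continuous_sum_mul_powerScore hα.le p)
      (stdSimplex_subset_closure_setOf_pos ⟨hp, hp1⟩) hmaps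
  exact (isLUB_of_mem_closure hupper hclosure).csSup_eq
    (closure_nonempty_iff.mp ⟨_, hclosure⟩)
end

section
/- Let X be a finite nonempty set, let 0 < α < 1, and let p be a probability distribution on X. Then the infimum over all strictly positive probability distributions r on X of the expected power score ∑_{x∈X} p(x) · (α · r(x)^{α−1} + (1−α) · ∑_{x'∈X} r(x')^α) equals ∑_{x∈X} p(x)^α. -/
/-!
Writing the score as `∑ x, (α p(x) r(x)^(α-1) + (1-α) r(x)^α)`, each summand is the tangent line
of the concave map `y ↦ y^α` at `r(x)`, evaluated at `p(x)`; it therefore dominates `p(x)^α`.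
The bound is approached by the strictly positive distributions `r_t = (p + t) / (1 + t |X|)` as
`t → 0⁺`, along which the score is continuous even where `p` vanishes, because there the term
`p(x) r(x)^(α-1)` is identically zero.
-/

open Real BigOperators Finset Filter Topology

noncomputable def expectedPowerScore {X : Type*} [Fintype X] (α : ℝ) (p r : X → ℝ) : ℝ :=
  ∑ x, p x * (α * r x ^ (α - 1) + (1 - α) * ∑ x', r x' ^ α)

theorem expectedPowerScore_eq_sum {X : Type*} [Fintype X] (α : ℝ) {p : X → ℝ}
    (hp1 : ∑ x, p x = 1) (r : X → ℝ) :
    expectedPowerScore α p r = ∑ x, (α * (p x * r x ^ (α - 1)) + (1 - α) * r x ^ α) := by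
  simp only [expectedPowerScore, mul_add, sum_add_distrib]
  congr 1
  · exact sum_congr rfl fun x _ => by ring
  · rw [← sum_mul, hp1, one_mul, mul_sum]

theorem rpow_le_tangent_line {α p r : ℝ} (hα0 : 0 ≤ α) (hα1 : α ≤ 1) (hp : 0 ≤ p) (hr : 0 < r) :
    p ^ α ≤ α * (p * r ^ (α - 1)) + (1 - α) * r ^ α := by
  have amgm := geom_mean_le_arith_mean2_weighted hα0 (sub_nonneg.2 hα1)
    (mul_nonneg hp (rpow_nonneg hr.le (α - 1))) (rpow_nonneg hr.le α) (add_sub_cancel α 1)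
  have geom_mean_eq : (p * r ^ (α - 1)) ^ α * (r ^ α) ^ (1 - α) = p ^ α := by
    rw [mul_rpow hp (rpow_nonneg hr.le _), ← rpow_mul hr.le, ← rpow_mul hr.le, mul_assoc,
      ← rpow_add hr, show (α - 1) * α + α * (1 - α) = 0 by ring, rpow_zero, mul_one]
  rwa [geom_mean_eq] at amgm

theorem sum_rpow_le_expectedPowerScore {X : Type*} [Fintype X] {α : ℝ} (hα0 : 0 ≤ α)
    (hα1 : α ≤ 1) {p r : X → ℝ} (hp : ∀ x, 0 ≤ p x) (hp1 : ∑ x, p x = 1) (hr : ∀ x, 0 < r x) :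
    ∑ x, p x ^ α ≤ expectedPowerScore α p r := by
  rw [expectedPowerScore_eq_sum α hp1]
  exact sum_le_sum fun x _ => rpow_le_tangent_line hα0 hα1 (hp x) (hr x)

theorem Filter.Tendsto.const_mul_rpow_sub_one {ι : Type*} {l : Filter ι} {f : ι → ℝ}
    {a α : ℝ} (ha : 0 ≤ a) (hα : α ≠ 0) (hf : Tendsto f l (𝓝 a)) :
    Tendsto (fun t => a * f t ^ (α - 1)) l (𝓝 (a ^ α)) := by
  rcases ha.eq_or_lt with rfl | ha
  · simpa [zero_rpow hα] using tendsto_const_nhds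
  · have hlim : a * a ^ (α - 1) = a ^ α := by
      rw [← rpow_one_add' ha.le (by simpa using hα), add_sub_cancel]
    exact hlim ▸ tendsto_const_nhds.mul (hf.rpow_const (Or.inl ha.ne'))

theorem tendsto_expectedPowerScore {X ι : Type*} [Fintype X] {l : Filter ι} {α : ℝ}
    (hα : 0 < α) {p : X → ℝ} (hp : ∀ x, 0 ≤ p x) (hp1 : ∑ x, p x = 1) {q : ι → X → ℝ}
    (hq : ∀ x, Tendsto (fun t => q t x) l (𝓝 (p x))) :
    Tendsto (fun t => expectedPowerScore α p (q t)) l (𝓝 (∑ x, p x ^ α)) := by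
  simp only [expectedPowerScore_eq_sum α hp1]
  have hlim : ∑ x, p x ^ α = ∑ x, (α * p x ^ α + (1 - α) * p x ^ α) :=
    sum_congr rfl fun x _ => by ring
  rw [hlim]
  refine tendsto_finsetSum _ fun x _ => ?_
  exact (((hq x).const_mul_rpow_sub_one (hp x) hα.ne').const_mul α).add
    (((hq x).rpow_const (Or.inr hα.le)).const_mul (1 - α))

section Smoothing

variable {X : Type*} [Fintype X]

noncomputable def smoothDistrib (p : X → ℝ) (t : ℝ) (x : X) : ℝ :=
  (p x + t) / (1 + t * Fintype.card X)

theorem smoothDistrib_pos {p : X → ℝ} (hp : ∀ x, 0 ≤ p x) {t : ℝ} (ht : 0 < t) (x : X) :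
    0 < smoothDistrib p t x := by
  unfold smoothDistrib
  have := hp x
  positivity

theorem sum_smoothDistrib {p : X → ℝ} (hp1 : ∑ x, p x = 1) {t : ℝ} (ht : 0 ≤ t) :
    ∑ x, smoothDistrib p t x = 1 := by
  have hden : 0 < 1 + t * Fintype.card X := by positivity
  simp only [smoothDistrib, ← sum_div, sum_add_distrib, hp1, sum_const, card_univ, nsmul_eq_mul]
  field_simp

theorem tendsto_smoothDistrib (p : X → ℝ) (x : X) :
    Tendsto (fun t => smoothDistrib p t x) (𝓝 0) (𝓝 (p x)) := by
  have hcont : ContinuousAt (fun t : ℝ => smoothDistrib p t x) 0 := by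
    unfold smoothDistrib
    exact (continuousAt_const.add continuousAt_id).div (by fun_prop) (by simp)
  simpa [smoothDistrib] using hcont.tendsto

end Smoothing

theorem power_score_inf_general
    {X : Type*} [Fintype X]
    (α : ℝ) (hα0 : 0 < α) (hα1 : α < 1)
    (p : X → ℝ) (hp : ∀ x, 0 ≤ p x) (hp1 : (∑ x, p x) = 1) :
    sInf {v : ℝ | ∃ r : X → ℝ, (∀ x, 0 < r x) ∧ (∑ x, r x) = 1 ∧
        v = ∑ x, p x * (α * r x ^ (α - 1) + (1 - α) * ∑ x', r x' ^ α)}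
      = ∑ x, p x ^ α := by
  set S := {v : ℝ | ∃ r : X → ℝ, (∀ x, 0 < r x) ∧ (∑ x, r x) = 1 ∧
    v = expectedPowerScore α p r}
  change sInf S = _
  have lower_bound : ∀ v ∈ S, ∑ x, p x ^ α ≤ v := by
    rintro v ⟨r, hr, -, rfl⟩
    exact sum_rpow_le_expectedPowerScore hα0.le hα1.le hp hp1 hr
  have smooth_mem : ∀ᶠ t in 𝓝[>] (0 : ℝ), expectedPowerScore α p (smoothDistrib p t) ∈ S := by
    filter_upwards [self_mem_nhdsWithin] with t (ht : 0 < t)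
    exact ⟨_, smoothDistrib_pos hp ht, sum_smoothDistrib hp1 ht.le, rfl⟩
  have smooth_tendsto := tendsto_expectedPowerScore (l := 𝓝[>] 0) hα0 hp hp1
    fun x => (tendsto_smoothDistrib p x).mono_left nhdsWithin_le_nhds
  refine le_antisymm (ge_of_tendsto smooth_tendsto ?_) (le_csInf ?_ lower_bound)
  · filter_upwards [smooth_mem] with t ht using csInf_le ⟨_, lower_bound⟩ ht
  · obtain ⟨t, ht⟩ := smooth_mem.exists
    exact ⟨_, ht⟩

/-- For `0 < α < 1`, the infimum over strictly positive distributions `r` of the expected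
power score equals `∑ x, p x ^ α`. -/
theorem power_score_inf
    {X : Type*} [Fintype X] [Nonempty X]
    (α : ℝ) (hα0 : 0 < α) (hα1 : α < 1)
    (p : X → ℝ) (hp : ∀ x, 0 ≤ p x) (hp1 : (∑ x, p x) = 1) :
    sInf {v : ℝ | ∃ r : X → ℝ, (∀ x, 0 < r x) ∧ (∑ x, r x) = 1 ∧
        v = ∑ x, p x * (α * r x ^ (α - 1) + (1 - α) * ∑ x', r x' ^ α)}
      = ∑ x, p x ^ α :=
  power_score_inf_general α hα0 hα1 p hp hp1
end

section
/- Let X be a finite nonempty set, let α ∈ (0,1) ∪ (1,∞), and let p be a probability distribution on X with ∑_x p(x)^α > 0. Then the supremum over all strictly positive probability distributions r on X of (∑_{x∈X} p(x) · r(x)^{(α−1)/α})^{α/(α−1)} equals (∑_{x∈X} p(x)^α)^{1/(α−1)}; that is, the generalized prior vulnerability with Kolmogorov–Nagumo function ln_{1/α} and the soft 0-1 score equals exp(−H_α(X)), where H_α is the Rényi entropy of order α. -/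
open Real BigOperators Finset

/-!
For `α > 1` Hölder's inequality with exponents `α, α/(α-1)` bounds
`∑ p r^((α-1)/α) ≤ (∑ p^α)^(1/α)`; for `α < 1` Hölder with exponents `1/α, 1/(1-α)` gives the
reverse inequality `∑ p^α ≤ (∑ p r^((α-1)/α))^α`, and raising to the (now negative) power
`1/(α-1)` turns both into the upper bound `(∑ p^α)^(1/(α-1))`. Equality holds at the escort
distribution `p^α / ∑ p^α`, which may vanish where `p` does; it is a limit of strictly positive
distributions and the objective is continuous there, so the bound is the supremum.
-/

open Filter Topology

section

variable {X : Type*} [Fintype X]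

theorem sum_mul_rpow_le_of_one_lt {α : ℝ} (hα : 1 < α) {p r : X → ℝ} (hp : ∀ x, 0 ≤ p x)
    (hr : ∀ x, 0 ≤ r x) (hr1 : ∑ x, r x = 1) :
    ∑ x, p x * r x ^ ((α - 1) / α) ≤ (∑ x, p x ^ α) ^ (1 / α) := by
  have hα1 : α - 1 ≠ 0 := sub_ne_zero.2 hα.ne'
  have hconj : HolderConjugate α (α / (α - 1)) :=
    holderConjugate_iff.2 ⟨hα, by field_simp; ring⟩
  have hold := inner_le_Lp_mul_Lq_of_nonneg (s := univ) (f := p)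
    (g := fun x => r x ^ ((α - 1) / α)) hconj (fun x _ => hp x) (fun x _ => rpow_nonneg (hr x) _)
  have hg : ∀ x, (r x ^ ((α - 1) / α)) ^ (α / (α - 1)) = r x := fun x => by
    rw [← rpow_mul (hr x), show (α - 1) / α * (α / (α - 1)) = 1 by field_simp, rpow_one]
  simpa only [hg, hr1, one_rpow, mul_one] using hold

theorem sum_rpow_le_rpow_sum_mul_rpow_of_lt_one {α : ℝ} (hα0 : 0 < α) (hα1 : α < 1)
    {p r : X → ℝ} (hp : ∀ x, 0 ≤ p x) (hr : ∀ x, 0 < r x) (hr1 : ∑ x, r x = 1) :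
    ∑ x, p x ^ α ≤ (∑ x, p x * r x ^ ((α - 1) / α)) ^ α := by
  have hconj : HolderConjugate (1 / α) (1 / (1 - α)) :=
    holderConjugate_iff.2 ⟨by rw [lt_div_iff₀ hα0]; linarith, by field_simp; ring⟩
  have hterm : ∀ x, 0 ≤ p x * r x ^ ((α - 1) / α) := fun x =>
    mul_nonneg (hp x) (rpow_nonneg (hr x).le _)
  have hold := inner_le_Lp_mul_Lq_of_nonneg (s := univ)
    (f := fun x => (p x * r x ^ ((α - 1) / α)) ^ α) (g := fun x => r x ^ (1 - α)) hconj
    (fun x _ => rpow_nonneg (hterm x) _) (fun x _ => rpow_nonneg (hr x).le _)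
  have hfg : ∀ x, (p x * r x ^ ((α - 1) / α)) ^ α * r x ^ (1 - α) = p x ^ α := fun x => by
    rw [mul_rpow (hp x) (rpow_nonneg (hr x).le _), ← rpow_mul (hr x).le, mul_assoc,
      ← rpow_add (hr x), div_mul_cancel₀ _ hα0.ne', sub_add_sub_cancel', sub_self, rpow_zero,
      mul_one]
  have hf : ∀ x, ((p x * r x ^ ((α - 1) / α)) ^ α) ^ (1 / α) = p x * r x ^ ((α - 1) / α) :=
    fun x => by rw [← rpow_mul (hterm x), mul_one_div_cancel hα0.ne', rpow_one]
  have hg : ∀ x, (r x ^ (1 - α)) ^ (1 / (1 - α)) = r x := fun x => by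
    rw [← rpow_mul (hr x).le, mul_one_div_cancel (by linarith), rpow_one]
  simpa only [hfg, hf, hg, hr1, one_rpow, mul_one, one_div_one_div] using hold

theorem rpow_one_div_rpow_div_sub_one {S : ℝ} (hS : 0 ≤ S) {α : ℝ} (hα : α ≠ 0) :
    (S ^ (1 / α)) ^ (α / (α - 1)) = S ^ (1 / (α - 1)) := by
  rw [← rpow_mul hS, one_div_mul_eq_div, div_div_cancel_left' hα, one_div]

theorem rpow_sum_mul_rpow_le {α : ℝ} (hα0 : 0 < α) (hα1 : α ≠ 1) {p r : X → ℝ}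
    (hp : ∀ x, 0 ≤ p x) (hr : ∀ x, 0 < r x) (hr1 : ∑ x, r x = 1) (hps : 0 < ∑ x, p x ^ α) :
    (∑ x, p x * r x ^ ((α - 1) / α)) ^ (α / (α - 1)) ≤ (∑ x, p x ^ α) ^ (1 / (α - 1)) := by
  have hT : 0 ≤ ∑ x, p x * r x ^ ((α - 1) / α) :=
    sum_nonneg fun x _ => mul_nonneg (hp x) (rpow_nonneg (hr x).le _)
  rcases hα1.lt_or_gt with hlt | hgt
  · calc (∑ x, p x * r x ^ ((α - 1) / α)) ^ (α / (α - 1))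
          = ((∑ x, p x * r x ^ ((α - 1) / α)) ^ α) ^ (1 / (α - 1)) := by
            rw [← rpow_mul hT, mul_one_div]
      _ ≤ (∑ x, p x ^ α) ^ (1 / (α - 1)) :=
            rpow_le_rpow_of_nonpos hps
              (sum_rpow_le_rpow_sum_mul_rpow_of_lt_one hα0 hlt hp hr hr1)
              (div_nonpos_of_nonneg_of_nonpos zero_le_one (by linarith))
  · calc (∑ x, p x * r x ^ ((α - 1) / α)) ^ (α / (α - 1))
          ≤ ((∑ x, p x ^ α) ^ (1 / α)) ^ (α / (α - 1)) :=
            rpow_le_rpow hT (sum_mul_rpow_le_of_one_lt hgt hp (fun x => (hr x).le) hr1)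
              (div_nonneg hα0.le (by linarith))
      _ = (∑ x, p x ^ α) ^ (1 / (α - 1)) := rpow_one_div_rpow_div_sub_one hps.le hα0.ne'

noncomputable def escort (α : ℝ) (p : X → ℝ) : X → ℝ := fun x => p x ^ α / ∑ y, p y ^ α

theorem escort_mem_stdSimplex {α : ℝ} {p : X → ℝ} (hp : ∀ x, 0 ≤ p x)
    (hps : 0 < ∑ x, p x ^ α) : escort α p ∈ stdSimplex ℝ X :=
  ⟨fun x => div_nonneg (rpow_nonneg (hp x) _) hps.le, by
    simp only [escort, ← sum_div, div_self hps.ne']⟩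

theorem sum_mul_escort_rpow {α : ℝ} (hα : α ≠ 0) {p : X → ℝ} (hp : ∀ x, 0 ≤ p x)
    (hps : 0 < ∑ x, p x ^ α) :
    ∑ x, p x * escort α p x ^ ((α - 1) / α) = (∑ x, p x ^ α) ^ (1 / α) := by
  set S := ∑ x, p x ^ α
  have hterm : ∀ x, p x * escort α p x ^ ((α - 1) / α) = p x ^ α * S ^ (-((α - 1) / α)) :=
    fun x => by
      rw [escort, div_rpow (rpow_nonneg (hp x) _) hps.le, ← rpow_mul (hp x),
        mul_div_cancel₀ _ hα, rpow_neg hps.le, div_eq_mul_inv, ← mul_assoc,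
        ← rpow_one_add' (hp x) (by simpa using hα), add_sub_cancel]
  have hexp : 1 + -((α - 1) / α) = 1 / α := by field_simp; ring
  rw [sum_congr rfl fun x _ => hterm x, ← sum_mul,
    ← rpow_one_add' hps.le (hexp ▸ one_div_ne_zero hα), hexp]

theorem continuousAt_sum_mul_rpow (p : X → ℝ) (c : ℝ) {r₀ : X → ℝ}
    (h : ∀ x, p x ≠ 0 → r₀ x ≠ 0) :
    ContinuousAt (fun r : X → ℝ => ∑ x, p x * r x ^ c) r₀ := by
  refine tendsto_finsetSum _ fun x _ => ?_
  by_cases hx : p x = 0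
  · simp only [hx, zero_mul]
    exact continuousAt_const
  · exact (((continuous_apply x).continuousAt (x := r₀)).rpow_const (Or.inl (h x hx))).const_mul _

theorem exists_seq_pos_tendsto_of_mem_stdSimplex {q : X → ℝ} (hq : q ∈ stdSimplex ℝ X) :
    ∃ r : ℕ → X → ℝ, (∀ n x, 0 < r n x) ∧ (∀ n, ∑ x, r n x = 1) ∧ Tendsto r atTop (𝓝 q) := by
  have : Nonempty X := by
    by_contra h
    simpa [not_nonempty_iff.1 h] using hq.2
  have hcard : (0 : ℝ) < Fintype.card X := by exact_mod_cast Fintype.card_pos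
  set u : X → ℝ := fun _ => 1 / Fintype.card X
  set ε : ℕ → ℝ := fun n => 1 / (n + 1)
  have hε : ∀ n, ε n ∈ Set.Ioc 0 1 := fun n =>
    ⟨by positivity, div_le_one_of_le₀ (by linarith [n.cast_nonneg (α := ℝ)]) (by positivity)⟩
  refine ⟨fun n => (1 - ε n) • q + ε n • u, fun n x => ?_, fun n => ?_, ?_⟩
  · have := mul_nonneg (sub_nonneg.2 (hε n).2) (hq.1 x)
    have : 0 < ε n * u x := mul_pos (hε n).1 (by positivity)
    simp only [Pi.add_apply, Pi.smul_apply, smul_eq_mul]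
    linarith
  · simp only [Pi.add_apply, Pi.smul_apply, smul_eq_mul, sum_add_distrib, ← mul_sum, hq.2, u,
      sum_const, card_univ, nsmul_eq_mul]
    field_simp
    ring
  · have hε0 : Tendsto ε atTop (𝓝 0) := tendsto_one_div_add_atTop_nhds_zero_nat
    simpa using (((tendsto_const_nhds (x := (1 : ℝ))).sub hε0).smul_const q).add (hε0.smul_const u)

end

theorem prior_vulnerability_eq_exp_neg_renyi_general
    {X : Type*} [Fintype X]
    (α : ℝ) (hα0 : 0 < α) (hα1 : α ≠ 1)
    (p : X → ℝ) (hp : ∀ x, 0 ≤ p x)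
    (hps : 0 < ∑ x, p x ^ α) :
    sSup {v : ℝ | ∃ r : X → ℝ, (∀ x, 0 < r x) ∧ (∑ x, r x) = 1 ∧
        v = (∑ x, p x * r x ^ ((α - 1) / α)) ^ (α / (α - 1))}
      = (∑ x, p x ^ α) ^ (1 / (α - 1)) := by
  obtain ⟨r, hr, hr1, hlim⟩ :=
    exists_seq_pos_tendsto_of_mem_stdSimplex (escort_mem_stdSimplex hp hps)
  have hsupport : ∀ x, p x ≠ 0 → escort α p x ≠ 0 := fun x hx =>
    div_ne_zero (rpow_pos_of_pos ((hp x).lt_of_ne' hx) _).ne' hps.ne'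
  have hvalue : Tendsto (fun n => (∑ x, p x * r n x ^ ((α - 1) / α)) ^ (α / (α - 1))) atTop
      (𝓝 ((∑ x, p x ^ α) ^ (1 / (α - 1)))) := by
    rw [← rpow_one_div_rpow_div_sub_one hps.le hα0.ne', ← sum_mul_escort_rpow hα0.ne' hp hps]
    refine ((continuousAt_sum_mul_rpow p _ hsupport).tendsto.comp hlim).rpow_const (Or.inl ?_)
    rw [sum_mul_escort_rpow hα0.ne' hp hps]
    positivity
  refine IsLUB.csSup_eq ⟨?_, fun b hb => ?_⟩ ⟨_, r 0, hr 0, hr1 0, rfl⟩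
  · rintro _ ⟨r, hr, hr1, rfl⟩
    exact rpow_sum_mul_rpow_le hα0 hα1 hp hr hr1 hps
  · exact le_of_tendsto' hvalue fun n => hb ⟨r n, hr n, hr1 n, rfl⟩

/-- The generalized prior vulnerability with KN function `ln_{1/α}` and the soft 0-1
score equals `exp(−H_α(X))`: the supremum over strictly positive distributions `r` of
`(∑ x, p x · r x ^ ((α−1)/α)) ^ (α/(α−1))` equals `(∑ x, p x ^ α) ^ (1/(α−1))`. -/
theorem prior_vulnerability_eq_exp_neg_renyi
    {X : Type*} [Fintype X] [Nonempty X]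
    (α : ℝ) (hα0 : 0 < α) (hα1 : α ≠ 1)
    (p : X → ℝ) (hp : ∀ x, 0 ≤ p x) (hp1 : (∑ x, p x) = 1)
    (hps : 0 < ∑ x, p x ^ α) :
    sSup {v : ℝ | ∃ r : X → ℝ, (∀ x, 0 < r x) ∧ (∑ x, r x) = 1 ∧
        v = (∑ x, p x * r x ^ ((α - 1) / α)) ^ (α / (α - 1))}
      = (∑ x, p x ^ α) ^ (1 / (α - 1)) :=
  prior_vulnerability_eq_exp_neg_renyi_general α hα0 hα1 p hp hps
end

section
/- Let X and Y be finite nonempty sets, let α ∈ (0,1) ∪ (1,∞), and let p be a probability distribution on X × Y. Then the supremum over all strictly positive families r_{X|Y} of (∑_{x,y} p(x,y) · r(x|y)^{(α−1)/α})^{α/(α−1)} equals (∑_{y∈Y} (∑_{x∈X} p(x,y)^α)^{1/α})^{α/(α−1)}; that is, the generalized conditional vulnerability with Kolmogorov–Nagumo function ln_{1/α} and the soft 0-1 score equals exp(−H_α^A(X|Y)), where H_α^A is the Arimoto conditional entropy of order α. -/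
open Real BigOperators Finset Filter Topology

/-!
The objective splits over `y`. For a column `f = p(·, y)` and a distribution `g`, substituting
`z = f g^{-1/α}` turns `∑ f g^{(α-1)/α}` into the `g`-mean of `z` and `∑ f^α` into the `g`-mean
of `z^α`, so Jensen's inequality for `t ↦ t^α` bounds `∑ f g^{(α-1)/α}` by `‖f‖_α` from above
when `α > 1` and from below when `α < 1`. The bound is attained by the escort distribution
`f^α / ∑ f^α`, which need not be strictly positive; it is approached by strictly positive
smoothings. Since `t ↦ t^{α/(α-1)}` is increasing for `α > 1` and decreasing for `α < 1`,
both cases give the same supremum.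
-/

section Column

variable {X : Type*} [Fintype X] {α : ℝ} {f g : X → ℝ}

lemma mul_mul_rpow_neg_inv (hα : α ≠ 0) {a b : ℝ} (hb : 0 < b) :
    b * (a * b ^ (-1 / α)) = a * b ^ ((α - 1) / α) := by
  rw [mul_left_comm, mul_comm b, ← rpow_add_one hb.ne']
  congr 2
  field_simp
  ring

lemma mul_mul_rpow_neg_inv_rpow (hα : α ≠ 0) {a b : ℝ} (ha : 0 ≤ a) (hb : 0 < b) :
    b * (a * b ^ (-1 / α)) ^ α = a ^ α := by
  rw [mul_rpow ha (rpow_nonneg hb.le _), ← rpow_mul hb.le, div_mul_cancel₀ _ hα, mul_left_comm,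
    rpow_neg_one, mul_inv_cancel₀ hb.ne', mul_one]

lemma sum_mul_rpow_le_of_one_le (hα : 1 ≤ α) (hf : ∀ x, 0 ≤ f x) (hg : ∀ x, 0 < g x)
    (hg1 : ∑ x, g x = 1) :
    ∑ x, f x * g x ^ ((α - 1) / α) ≤ (∑ x, f x ^ α) ^ (1 / α) := by
  have hα0 : α ≠ 0 := by positivity
  have h := arith_mean_le_rpow_mean univ g (fun x => f x * g x ^ (-1 / α))
    (fun x _ => (hg x).le) hg1 (fun x _ => mul_nonneg (hf x) (rpow_nonneg (hg x).le _)) hα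
  simpa only [mul_mul_rpow_neg_inv hα0 (hg _), mul_mul_rpow_neg_inv_rpow hα0 (hf _) (hg _)]
    using h

lemma rpow_sum_le_sum_mul_rpow_of_le_one (hα0 : 0 < α) (hα : α ≤ 1) (hf : ∀ x, 0 ≤ f x)
    (hg : ∀ x, 0 < g x) (hg1 : ∑ x, g x = 1) :
    (∑ x, f x ^ α) ^ (1 / α) ≤ ∑ x, f x * g x ^ ((α - 1) / α) := by
  have h := (concaveOn_rpow hα0.le hα).le_map_sum (t := univ) (p := fun x => f x * g x ^ (-1 / α))
    (fun x _ => (hg x).le) hg1 (fun x _ => mul_nonneg (hf x) (rpow_nonneg (hg x).le _))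
  simp only [smul_eq_mul, mul_mul_rpow_neg_inv_rpow hα0.ne' (hf _) (hg _),
    mul_mul_rpow_neg_inv hα0.ne' (hg _)] at h
  have hS : 0 ≤ ∑ x, f x * g x ^ ((α - 1) / α) :=
    sum_nonneg fun x _ => mul_nonneg (hf x) (rpow_nonneg (hg x).le _)
  calc (∑ x, f x ^ α) ^ (1 / α)
      ≤ ((∑ x, f x * g x ^ ((α - 1) / α)) ^ α) ^ (1 / α) :=
        rpow_le_rpow (sum_nonneg fun x _ => rpow_nonneg (hf x) _) h (by positivity)
    _ = ∑ x, f x * g x ^ ((α - 1) / α) := by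
        rw [← rpow_mul hS, mul_one_div_cancel hα0.ne', rpow_one]

lemma sum_mul_escort_rpow_s9 (hα0 : 0 < α) (hf : ∀ x, 0 ≤ f x) :
    ∑ x, f x * (f x ^ α / ∑ x', f x' ^ α) ^ ((α - 1) / α) = (∑ x, f x ^ α) ^ (1 / α) := by
  have hB : 0 ≤ ∑ x, f x ^ α := sum_nonneg fun x _ => rpow_nonneg (hf x) _
  have hterm : ∀ x, f x * (f x ^ α / ∑ x', f x' ^ α) ^ ((α - 1) / α)
      = f x ^ α / (∑ x', f x' ^ α) ^ ((α - 1) / α) := fun x => by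
    rw [div_rpow (rpow_nonneg (hf x) _) hB, ← rpow_mul (hf x), ← mul_div_assoc,
      mul_div_cancel₀ _ hα0.ne', ← rpow_one_add' (hf x) (by simpa using hα0.ne'),
      add_sub_cancel]
  rw [sum_congr rfl fun x _ => hterm x, ← sum_div,
    ← rpow_one_sub' hB (by field_simp; simpa using hα0.ne')]
  congr 1
  field_simp
  ring

noncomputable def smoothedEscort (α δ : ℝ) (f : X → ℝ) (x : X) : ℝ :=
  (f x ^ α + δ) / (∑ x', f x' ^ α + Fintype.card X * δ)

lemma smoothedEscort_denom_pos [Nonempty X] (hf : ∀ x, 0 ≤ f x) {δ : ℝ} (hδ : 0 < δ) :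
    0 < ∑ x, f x ^ α + Fintype.card X * δ :=
  add_pos_of_nonneg_of_pos (sum_nonneg fun x _ => rpow_nonneg (hf x) α) (by positivity)

lemma smoothedEscort_pos [Nonempty X] (hf : ∀ x, 0 ≤ f x) {δ : ℝ} (hδ : 0 < δ) (x : X) :
    0 < smoothedEscort α δ f x :=
  div_pos (add_pos_of_nonneg_of_pos (rpow_nonneg (hf x) α) hδ) (smoothedEscort_denom_pos hf hδ)

lemma sum_smoothedEscort [Nonempty X] (hf : ∀ x, 0 ≤ f x) {δ : ℝ} (hδ : 0 < δ) :
    ∑ x, smoothedEscort α δ f x = 1 := by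
  unfold smoothedEscort
  rw [← sum_div, sum_add_distrib, sum_const, card_univ, nsmul_eq_mul,
    div_self (smoothedEscort_denom_pos hf hδ).ne']

lemma tendsto_sum_mul_smoothedEscort_rpow (hα0 : 0 < α) (hf : ∀ x, 0 ≤ f x) :
    Tendsto (fun δ => ∑ x, f x * smoothedEscort α δ f x ^ ((α - 1) / α)) (𝓝[>] 0)
      (𝓝 ((∑ x, f x ^ α) ^ (1 / α))) := by
  have hcont : ∀ x, ContinuousAt (fun δ => f x * smoothedEscort α δ f x ^ ((α - 1) / α)) 0 := by
    intro x
    rcases (hf x).eq_or_lt with hx | hx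
    · simp only [← hx, zero_mul]
      exact continuousAt_const
    have hB : 0 < ∑ x', f x' ^ α :=
      sum_pos' (fun x' _ => rpow_nonneg (hf x') α) ⟨x, mem_univ x, rpow_pos_of_pos hx α⟩
    unfold smoothedEscort
    exact continuousAt_const.mul <| ContinuousAt.rpow_const (by fun_prop (disch := simp [hB.ne']))
      (Or.inl (by simp [(rpow_pos_of_pos hx α).ne', hB.ne']))
  have hlim := (tendsto_finsetSum univ fun x _ => (hcont x).tendsto).mono_left
    (nhdsWithin_le_nhds (s := Set.Ioi 0))
  simpa [smoothedEscort, sum_mul_escort_rpow_s9 hα0 hf] using hlim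

end Column

lemma rpow_sum_sum_mul_rpow_le {X Y : Type*} [Fintype X] [Fintype Y] {α : ℝ} (hα0 : 0 < α)
    (hα1 : α ≠ 1) {q r : Y → X → ℝ} (hq : ∀ y x, 0 ≤ q y x)
    (hC : 0 < ∑ y, (∑ x, q y x ^ α) ^ (1 / α)) (hr : ∀ y x, 0 < r y x)
    (hr1 : ∀ y, ∑ x, r y x = 1) :
    (∑ y, ∑ x, q y x * r y x ^ ((α - 1) / α)) ^ (α / (α - 1))
      ≤ (∑ y, (∑ x, q y x ^ α) ^ (1 / α)) ^ (α / (α - 1)) := by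
  rcases hα1.lt_or_gt with hlt | hgt
  · refine rpow_le_rpow_of_nonpos hC (sum_le_sum fun y _ => ?_)
      (div_nonpos_of_nonneg_of_nonpos hα0.le (by linarith))
    exact rpow_sum_le_sum_mul_rpow_of_le_one hα0 hlt.le (hq y) (hr y) (hr1 y)
  · refine rpow_le_rpow (sum_nonneg fun y _ => sum_nonneg fun x _ =>
      mul_nonneg (hq y x) (rpow_nonneg (hr y x).le _)) (sum_le_sum fun y _ => ?_)
      (div_nonneg hα0.le (by linarith))
    exact sum_mul_rpow_le_of_one_le hgt.le (hq y) (hr y) (hr1 y)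

theorem conditional_vulnerability_eq_exp_neg_arimoto_general
    {X Y : Type*} [Fintype X] [Fintype Y] [Nonempty X]
    (α : ℝ) (hα0 : 0 < α) (hα1 : α ≠ 1)
    (p : X × Y → ℝ) (hp : ∀ z, 0 ≤ p z) (hp1 : (∑ z, p z) = 1) :
    sSup {v : ℝ | ∃ r : Y → X → ℝ, (∀ y x, 0 < r y x) ∧ (∀ y, (∑ x, r y x) = 1) ∧
        v = (∑ z : X × Y, p z * r z.2 z.1 ^ ((α - 1) / α)) ^ (α / (α - 1))}
      = (∑ y, (∑ x, p (x, y) ^ α) ^ (1 / α)) ^ (α / (α - 1)) := by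
  have hsplit : ∀ r : Y → X → ℝ, ∑ z : X × Y, p z * r z.2 z.1 ^ ((α - 1) / α)
      = ∑ y, ∑ x, p (x, y) * r y x ^ ((α - 1) / α) := fun r => Fintype.sum_prod_type_right _
  obtain ⟨z₀, -, hz₀⟩ : ∃ z ∈ univ, 0 < p z :=
    exists_lt_of_sum_lt (by simp [hp1] : ∑ z : X × Y, (0 : ℝ) < ∑ z, p z)
  have hcol : 0 < ∑ x, p (x, z₀.2) ^ α :=
    sum_pos' (fun x _ => rpow_nonneg (hp _) _) ⟨z₀.1, mem_univ _, rpow_pos_of_pos hz₀ _⟩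
  have hC : 0 < ∑ y, (∑ x, p (x, y) ^ α) ^ (1 / α) :=
    sum_pos' (fun y _ => rpow_nonneg (sum_nonneg fun x _ => rpow_nonneg (hp _) _) _)
      ⟨z₀.2, mem_univ _, rpow_pos_of_pos hcol _⟩
  set S := {v : ℝ | ∃ r : Y → X → ℝ, (∀ y x, 0 < r y x) ∧ (∀ y, (∑ x, r y x) = 1) ∧
        v = (∑ z : X × Y, p z * r z.2 z.1 ^ ((α - 1) / α)) ^ (α / (α - 1))}
  have hsmoothed : ∀ δ > 0, (∑ y, ∑ x, p (x, y) *
      smoothedEscort α δ (fun x => p (x, y)) x ^ ((α - 1) / α)) ^ (α / (α - 1)) ∈ S :=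
    fun δ hδ => ⟨fun y => smoothedEscort α δ (fun x => p (x, y)),
      fun y => smoothedEscort_pos (fun x => hp _) hδ,
      fun y => sum_smoothedEscort (fun x => hp _) hδ,
      congrArg (· ^ (α / (α - 1))) (hsplit _).symm⟩
  have hlim := ((continuousAt_rpow_const _ (α / (α - 1)) (Or.inl hC.ne')).tendsto.comp
    (tendsto_finsetSum univ fun y _ =>
      tendsto_sum_mul_smoothedEscort_rpow hα0 fun x => hp (x, y)))
  refine IsLUB.csSup_eq (isLUB_of_mem_closure ?_ (mem_closure_of_tendsto hlim
    (eventually_mem_nhdsWithin.mono hsmoothed))) ⟨_, hsmoothed 1 one_pos⟩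
  rintro _ ⟨r, hr, hr1, rfl⟩
  rw [hsplit]
  exact rpow_sum_sum_mul_rpow_le hα0 hα1 (fun y x => hp _) hC hr hr1

/-- The generalized conditional vulnerability with KN function `ln_{1/α}` and the soft
0-1 score equals `exp(−H_α^A(X|Y))` (Arimoto conditional entropy). -/
theorem conditional_vulnerability_eq_exp_neg_arimoto
    {X Y : Type*} [Fintype X] [Fintype Y] [Nonempty X] [Nonempty Y]
    (α : ℝ) (hα0 : 0 < α) (hα1 : α ≠ 1)
    (p : X × Y → ℝ) (hp : ∀ z, 0 ≤ p z) (hp1 : (∑ z, p z) = 1) :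
    sSup {v : ℝ | ∃ r : Y → X → ℝ, (∀ y x, 0 < r y x) ∧ (∀ y, (∑ x, r y x) = 1) ∧
        v = (∑ z : X × Y, p z * r z.2 z.1 ^ ((α - 1) / α)) ^ (α / (α - 1))}
      = (∑ y, (∑ x, p (x, y) ^ α) ^ (1 / α)) ^ (α / (α - 1)) :=
  conditional_vulnerability_eq_exp_neg_arimoto_general α hα0 hα1 p hp hp1
end

section
/- Let X and Y be finite nonempty sets, let α ∈ (0,1) ∪ (1,∞), let p be a strictly positive probability distribution on X, and let W be a channel from X to Y. Let p̃(x) = p(x)^{1/α} / ∑_{x'} p(x')^{1/α}. Then the Sibson mutual information of order α satisfies: inf over strictly positive probability distributions q on Y of (1/(α−1)) · log ∑_{x,y} p(x) · W(y|x)^α · q(y)^{1−α} = (1/(1−1/α)) · log ∑_{x∈X} p(x)^{1/α} − inf over strictly positive families r_{X|Y} of (α/(1−α)) · log ∑_{x,y} p̃(x) · W(y|x) · r(x|y)^{1−1/α}; in words, Sibson mutual information of order α equals the Rényi entropy of order 1/α of X minus the Sibson conditional entropy of order α of X given Y. -/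
/-!
For a probability vector `r` and `β ≠ 1`, Hölder's inequality compares `∑ⱼ cⱼ rⱼ ^ (1 - β)` with
`(∑ⱼ cⱼ ^ (1 / β)) ^ β` (from below when `β > 1`, from above when `β < 1`), with equality at
`r ∝ c ^ (1 / β)`. Since that optimiser may have zero entries, the infimum over strictly positive
`r` is only approached, along smoothed weights. Solving the Sibson infimum this way with `β = α`,
and the conditional one row by row with `β = 1 / α`, both sides of the identity become
`α / (α - 1) · log ∑_y (∑_x p(x) W(y|x) ^ α) ^ (1 / α)`.
-/

open Real Finset Filter Topology

section Holder

variable {J : Type*} [Fintype J]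

lemma sum_mul_le_rpow_sum_mul_rpow {p : ℝ} (hp : 1 ≤ p) {r g : J → ℝ} (hr : ∀ j, 0 ≤ r j)
    (hr1 : ∑ j, r j = 1) (hg : ∀ j, 0 ≤ g j) :
    ∑ j, r j * g j ≤ (∑ j, r j * g j ^ p) ^ p⁻¹ := by
  simpa [hr1] using inner_le_weight_mul_Lp_of_nonneg univ hp r g hr hg

lemma rpow_sum_rpow_one_div_le_sum_mul_rpow {β : ℝ} (hβ : 1 < β) {C r : J → ℝ}
    (hC : ∀ j, 0 ≤ C j) (hr : ∀ j, 0 < r j) (hr1 : ∑ j, r j = 1) :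
    (∑ j, C j ^ (1 / β)) ^ β ≤ ∑ j, C j * r j ^ (1 - β) := by
  have hβ0 : 0 < β := zero_lt_one.trans hβ
  have key := sum_mul_le_rpow_sum_mul_rpow hβ.le (fun j => (hr j).le) hr1
    (g := fun j => C j ^ (1 / β) / r j) fun j => div_nonneg (rpow_nonneg (hC j) _) (hr j).le
  have h1 (j : J) : r j * (C j ^ (1 / β) / r j) = C j ^ (1 / β) :=
    mul_div_cancel₀ _ (hr j).ne'
  have h2 (j : J) : r j * (C j ^ (1 / β) / r j) ^ β = C j * r j ^ (1 - β) := by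
    rw [div_rpow (rpow_nonneg (hC j) _) (hr j).le, ← rpow_mul (hC j), one_div_mul_cancel hβ0.ne',
      rpow_one, rpow_sub (hr j), rpow_one]
    field_simp
  simp only [h1, h2] at key
  exact (le_rpow_inv_iff_of_pos (sum_nonneg fun j _ => rpow_nonneg (hC j) _)
    (sum_nonneg fun j _ => mul_nonneg (hC j) (rpow_nonneg (hr j).le _)) hβ0).mp key

lemma sum_mul_rpow_le_rpow_sum_rpow_one_div {β : ℝ} (hβ0 : 0 < β) (hβ : β < 1) {C r : J → ℝ}
    (hC : ∀ j, 0 ≤ C j) (hr : ∀ j, 0 < r j) (hr1 : ∑ j, r j = 1) :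
    ∑ j, C j * r j ^ (1 - β) ≤ (∑ j, C j ^ (1 / β)) ^ β := by
  have key := sum_mul_le_rpow_sum_mul_rpow (one_le_inv₀ hβ0 |>.mpr hβ.le)
    (fun j => (hr j).le) hr1 (g := fun j => C j * r j ^ (-β))
    fun j => mul_nonneg (hC j) (rpow_nonneg (hr j).le _)
  have h1 (j : J) : r j * (C j * r j ^ (-β)) = C j * r j ^ (1 - β) := by
    rw [sub_eq_add_neg, rpow_add (hr j), rpow_one]; ring
  have h2 (j : J) : r j * (C j * r j ^ (-β)) ^ β⁻¹ = C j ^ (1 / β) := by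
    rw [mul_rpow (hC j) (rpow_nonneg (hr j).le _), ← rpow_mul (hr j).le, neg_mul,
      mul_inv_cancel₀ hβ0.ne', rpow_neg_one, one_div]
    field_simp [(hr j).ne']
  simpa only [h1, h2, inv_inv] using key

end Holder

section HolderWeights

variable {J : Type*} [Fintype J] {β : ℝ} {C : J → ℝ}

/-- At `t = 0` these are the Hölder-optimal weights `c ^ (1 / β) / ∑ c ^ (1 / β)`; for `t > 0` they
are strictly positive. -/
noncomputable def holderWeights (β : ℝ) (C : J → ℝ) (t : ℝ) (j : J) : ℝ :=
  (C j ^ (1 / β) + t) / (∑ k, C k ^ (1 / β) + t * Fintype.card J)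

lemma holderWeights_pos (hC : ∀ j, 0 ≤ C j) {t : ℝ} (ht : 0 < t) (j : J) :
    0 < holderWeights β C t j := by
  have : (0 : ℝ) < Fintype.card J := by exact_mod_cast Fintype.card_pos_iff.mpr ⟨j⟩
  unfold holderWeights
  have := sum_nonneg fun k (_ : k ∈ univ) => rpow_nonneg (hC k) (1 / β)
  have := rpow_nonneg (hC j) (1 / β)
  positivity

lemma sum_holderWeights [Nonempty J] (hC : ∀ j, 0 ≤ C j) {t : ℝ} (ht : 0 < t) :
    ∑ j, holderWeights β C t j = 1 := by
  have : (0 : ℝ) < Fintype.card J := by exact_mod_cast Fintype.card_pos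
  have := sum_nonneg fun k (_ : k ∈ univ) => rpow_nonneg (hC k) (1 / β)
  simp only [holderWeights]
  rw [← sum_div, sum_add_distrib, sum_const, card_univ, nsmul_eq_mul, mul_comm t,
    div_self (by positivity)]

lemma sum_mul_holderWeights_zero_rpow (hβ0 : 0 < β) (hC : ∀ j, 0 ≤ C j) :
    ∑ j, C j * holderWeights β C 0 j ^ (1 - β) = (∑ j, C j ^ (1 / β)) ^ β := by
  simp only [holderWeights, add_zero, zero_mul]
  rcases (sum_nonneg fun k (_ : k ∈ univ) => rpow_nonneg (hC k) (1 / β)).eq_or_lt with hM | hM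
  · have hC0 (j : J) : C j = 0 := by
      have := (sum_eq_zero_iff_of_nonneg fun k _ => rpow_nonneg (hC k) (1 / β)).mp hM.symm j
        (mem_univ j)
      exact ((rpow_eq_zero_iff_of_nonneg (hC j)).mp this).1
    simp [hC0, zero_rpow, hβ0.ne']
  set M := ∑ k, C k ^ (1 / β)
  have hterm (j : J) : C j * (C j ^ (1 / β) / M) ^ (1 - β) = C j ^ (1 / β) / M ^ (1 - β) := by
    rw [div_rpow (rpow_nonneg (hC j) _) hM.le, ← rpow_mul (hC j), mul_div_assoc']
    have hexp : 1 + 1 / β * (1 - β) = 1 / β := by field_simp; ring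
    congr 1
    nth_rw 1 [← rpow_one (C j)]
    rw [← rpow_add' (hC j) (by rw [hexp]; positivity), hexp]
  rw [sum_congr rfl fun j _ => hterm j, ← sum_div, div_eq_iff (rpow_pos_of_pos hM _).ne',
    ← rpow_add hM, add_sub_cancel, rpow_one]

lemma continuousAt_sum_mul_holderWeights_rpow (hC : ∀ j, 0 ≤ C j) :
    ContinuousAt (fun t => ∑ j, C j * holderWeights β C t j ^ (1 - β)) 0 := by
  refine tendsto_finsetSum _ fun j _ => ?_
  rcases (hC j).eq_or_lt with hCj | hCj
  · simp only [← hCj, zero_mul]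
    exact continuousAt_const
  have hnum : 0 < C j ^ (1 / β) := rpow_pos_of_pos hCj _
  have hM : 0 < ∑ k, C k ^ (1 / β) :=
    hnum.trans_le (single_le_sum (fun k _ => rpow_nonneg (hC k) _) (mem_univ j))
  have hw : ContinuousAt (fun t => holderWeights β C t j) 0 := by
    unfold holderWeights
    exact (continuous_const.add continuous_id).continuousAt.div
      (continuous_const.add (continuous_id.mul continuous_const)).continuousAt
      (by simpa using hM.ne')
  have hw0 : holderWeights β C 0 j ≠ 0 := by
    simp only [holderWeights, add_zero, zero_mul]
    exact (div_pos hnum hM).ne'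
  exact continuousAt_const.mul (hw.rpow_const (Or.inl hw0))

end HolderWeights

section Rows

variable {I J : Type*} [Fintype I] [Fintype J] {β : ℝ} {C : I → J → ℝ}

lemma sum_rpow_sum_rpow_one_div_pos (hC : ∀ i j, 0 ≤ C i j) (hCpos : ∃ i j, 0 < C i j) :
    0 < ∑ i, (∑ j, C i j ^ (1 / β)) ^ β := by
  obtain ⟨i0, j0, hC0⟩ := hCpos
  refine sum_pos' (fun i _ => rpow_nonneg (sum_nonneg fun j _ => rpow_nonneg (hC i j) _) _)
    ⟨i0, mem_univ _, rpow_pos_of_pos ?_ _⟩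
  exact sum_pos' (fun j _ => rpow_nonneg (hC i0 j) _) ⟨j0, mem_univ _, rpow_pos_of_pos hC0 _⟩

lemma log_sum_rpow_sum_rpow_one_div_le (hβ0 : 0 < β) (hβ1 : β ≠ 1) (hC : ∀ i j, 0 ≤ C i j)
    (hCpos : ∃ i j, 0 < C i j) {r : I → J → ℝ} (hr : ∀ i j, 0 < r i j)
    (hr1 : ∀ i, ∑ j, r i j = 1) :
    1 / (β - 1) * log (∑ i, (∑ j, C i j ^ (1 / β)) ^ β) ≤
      1 / (β - 1) * log (∑ i, ∑ j, C i j * r i j ^ (1 - β)) := by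
  rcases hβ1.lt_or_gt with hβ | hβ
  · obtain ⟨i0, j0, hC0⟩ := hCpos
    have hS : 0 < ∑ i, ∑ j, C i j * r i j ^ (1 - β) :=
      sum_pos' (fun i _ => sum_nonneg fun j _ => mul_nonneg (hC i j) (rpow_nonneg (hr i j).le _))
        ⟨i0, mem_univ _, sum_pos' (fun j _ => mul_nonneg (hC i0 j) (rpow_nonneg (hr i0 j).le _))
          ⟨j0, mem_univ _, mul_pos hC0 (rpow_pos_of_pos (hr i0 j0) _)⟩⟩
    refine mul_le_mul_of_nonpos_left (log_le_log hS (sum_le_sum fun i _ => ?_))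
      (one_div_nonpos.mpr (by linarith))
    exact sum_mul_rpow_le_rpow_sum_rpow_one_div hβ0 hβ (hC i) (hr i) (hr1 i)
  · refine mul_le_mul_of_nonneg_left (log_le_log (sum_rpow_sum_rpow_one_div_pos hC hCpos)
      (sum_le_sum fun i _ => ?_)) (one_div_nonneg.mpr (by linarith))
    exact rpow_sum_rpow_one_div_le_sum_mul_rpow hβ (hC i) (hr i) (hr1 i)

theorem sInf_log_sum_sum_mul_rpow_eq (hβ0 : 0 < β) (hβ1 : β ≠ 1) (hC : ∀ i j, 0 ≤ C i j)
    (hCpos : ∃ i j, 0 < C i j) :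
    sInf {v : ℝ | ∃ r : I → J → ℝ, (∀ i j, 0 < r i j) ∧ (∀ i, ∑ j, r i j = 1) ∧
        v = 1 / (β - 1) * log (∑ i, ∑ j, C i j * r i j ^ (1 - β))}
      = 1 / (β - 1) * log (∑ i, (∑ j, C i j ^ (1 / β)) ^ β) := by
  have : Nonempty J := let ⟨_, j, _⟩ := hCpos; ⟨j⟩
  set w : ℝ → I → J → ℝ := fun t i => holderWeights β (C i) t
  have hw {t : ℝ} (ht : 0 < t) : (∀ i j, 0 < w t i j) ∧ ∀ i, ∑ j, w t i j = 1 :=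
    ⟨fun i => holderWeights_pos (hC i) ht, fun i => sum_holderWeights (hC i) ht⟩
  have hlow : 1 / (β - 1) * log (∑ i, (∑ j, C i j ^ (1 / β)) ^ β) ∈ lowerBounds
      {v : ℝ | ∃ r : I → J → ℝ, (∀ i j, 0 < r i j) ∧ (∀ i, ∑ j, r i j = 1) ∧
        v = 1 / (β - 1) * log (∑ i, ∑ j, C i j * r i j ^ (1 - β))} := by
    rintro _ ⟨r, hr, hr1, rfl⟩
    exact log_sum_rpow_sum_rpow_one_div_le hβ0 hβ1 hC hCpos hr hr1
  have hlim : Tendsto (fun t => 1 / (β - 1) * log (∑ i, ∑ j, C i j * w t i j ^ (1 - β)))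
      (𝓝[>] 0) (𝓝 (1 / (β - 1) * log (∑ i, (∑ j, C i j ^ (1 / β)) ^ β))) := by
    have hcont : ContinuousAt (fun t => ∑ i, ∑ j, C i j * w t i j ^ (1 - β)) 0 :=
      tendsto_finsetSum _ fun i _ => continuousAt_sum_mul_holderWeights_rpow (hC i)
    have hval : ∑ i, ∑ j, C i j * w 0 i j ^ (1 - β) = ∑ i, (∑ j, C i j ^ (1 / β)) ^ β :=
      sum_congr rfl fun i _ => sum_mul_holderWeights_zero_rpow hβ0 (hC i)
    have hlog := (hcont.log (hval ▸ (sum_rpow_sum_rpow_one_div_pos hC hCpos).ne')).const_mul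
      (1 / (β - 1))
    rw [ContinuousAt, hval] at hlog
    exact hlog.mono_left nhdsWithin_le_nhds
  refine le_antisymm (ge_of_tendsto hlim ?_)
    (le_csInf ⟨_, w 1, (hw one_pos).1, (hw one_pos).2, rfl⟩ hlow)
  filter_upwards [self_mem_nhdsWithin] with t ht
  exact csInf_le ⟨_, hlow⟩ ⟨w t, (hw ht).1, (hw ht).2, rfl⟩

end Rows

theorem sInf_log_sum_mul_rpow_eq {J : Type*} [Fintype J] {β : ℝ} (hβ0 : 0 < β) (hβ1 : β ≠ 1)
    {A : J → ℝ} (hA : ∀ j, 0 ≤ A j) (hApos : ∃ j, 0 < A j) :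
    sInf {v : ℝ | ∃ q : J → ℝ, (∀ j, 0 < q j) ∧ ∑ j, q j = 1 ∧
        v = 1 / (β - 1) * log (∑ j, A j * q j ^ (1 - β))}
      = 1 / (β - 1) * log ((∑ j, A j ^ (1 / β)) ^ β) := by
  have h := sInf_log_sum_sum_mul_rpow_eq (I := Unit) hβ0 hβ1 (C := fun _ => A) (fun _ => hA)
    ⟨(), hApos⟩
  simp only [Fintype.sum_unique] at h
  rw [← h]
  congr 1
  ext v
  constructor
  · rintro ⟨q, hq, hq1, rfl⟩
    exact ⟨fun _ => q, fun _ => hq, fun _ => hq1, rfl⟩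
  · rintro ⟨r, hr, hr1, rfl⟩
    exact ⟨r (), hr (), hr1 (), rfl⟩

lemma sum_rpow_sum_tilted_mul_rpow {X Y : Type*} [Fintype X] [Fintype Y] {α : ℝ} (hα0 : 0 < α)
    {p pt : X → ℝ} (hp : ∀ x, 0 ≤ p x) {W : X → Y → ℝ} (hW : ∀ x y, 0 ≤ W x y) {T : ℝ}
    (hT : 0 < T) (hpt : ∀ x, pt x = p x ^ (1 / α) / T) :
    ∑ y, (∑ x, (pt x * W x y) ^ (1 / (1 / α))) ^ (1 / α)
      = (∑ y, (∑ x, p x * W x y ^ α) ^ (1 / α)) / T := by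
  have hinner (y : Y) : ∑ x, (pt x * W x y) ^ (1 / (1 / α)) = (∑ x, p x * W x y ^ α) / T ^ α := by
    rw [sum_div]
    refine sum_congr rfl fun x _ => ?_
    rw [one_div_one_div, hpt, mul_rpow (div_nonneg (rpow_nonneg (hp x) _) hT.le) (hW x y),
      div_rpow (rpow_nonneg (hp x) _) hT.le, ← rpow_mul (hp x), one_div_mul_cancel hα0.ne',
      rpow_one, div_mul_eq_mul_div]
  rw [sum_div]
  refine sum_congr rfl fun y _ => ?_
  rw [hinner, div_rpow (sum_nonneg fun x _ => mul_nonneg (hp x) (rpow_nonneg (hW x y) _))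
    (rpow_nonneg hT.le _), ← rpow_mul hT.le, mul_one_div_cancel hα0.ne', rpow_one]

theorem sibson_mi_eq_renyi_sub_sibson_cond_entropy_general
    {X Y : Type*} [Fintype X] [Fintype Y] [Nonempty X]
    (α : ℝ) (hα0 : 0 < α) (hα1 : α ≠ 1)
    (p : X → ℝ) (hp : ∀ x, 0 < p x)
    (W : X → Y → ℝ) (hW : ∀ x y, 0 ≤ W x y) (hW1 : ∀ x, (∑ y, W x y) = 1)
    (pt : X → ℝ) (hpt : ∀ x, pt x = p x ^ (1 / α) / ∑ x', p x' ^ (1 / α)) :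
    sInf {v : ℝ | ∃ q : Y → ℝ, (∀ y, 0 < q y) ∧ (∑ y, q y) = 1 ∧
        v = (1 / (α - 1)) * Real.log (∑ z : X × Y, p z.1 * W z.1 z.2 ^ α * q z.2 ^ (1 - α))}
      = (1 / (1 - 1 / α)) * Real.log (∑ x, p x ^ (1 / α))
        - sInf {v : ℝ | ∃ r : Y → X → ℝ, (∀ y x, 0 < r y x) ∧ (∀ y, (∑ x, r y x) = 1) ∧
            v = (α / (1 - α)) * Real.log
                  (∑ z : X × Y, pt z.1 * W z.1 z.2 * r z.2 z.1 ^ (1 - 1 / α))} := by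
  obtain ⟨x0⟩ : Nonempty X := inferInstance
  obtain ⟨y0, hy0⟩ : ∃ y, 0 < W x0 y := by
    by_contra! h
    simpa [sum_eq_zero fun y _ => le_antisymm (h y) (hW x0 y)] using hW1 x0
  have hT : 0 < ∑ x, p x ^ (1 / α) := sum_pos (fun x _ => rpow_pos_of_pos (hp x) _) univ_nonempty
  have hpt0 (x : X) : 0 < pt x := hpt x ▸ div_pos (rpow_pos_of_pos (hp x) _) hT
  have hA (y : Y) : 0 ≤ ∑ x, p x * W x y ^ α :=
    sum_nonneg fun x _ => mul_nonneg (hp x).le (rpow_nonneg (hW x y) _)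
  have hAy0 : 0 < ∑ x, p x * W x y0 ^ α :=
    (mul_pos (hp x0) (rpow_pos_of_pos hy0 _)).trans_le
      (single_le_sum (fun x _ => mul_nonneg (hp x).le (rpow_nonneg (hW x y0) _)) (mem_univ x0))
  have hM : 0 < ∑ y, (∑ x, p x * W x y ^ α) ^ (1 / α) :=
    sum_pos' (fun y _ => rpow_nonneg (hA y) _) ⟨y0, mem_univ _, rpow_pos_of_pos hAy0 _⟩
  have hcoef : α / (1 - α) = 1 / (1 / α - 1) := by field_simp
  simp only [Fintype.sum_prod_type_right, ← sum_mul]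
  rw [hcoef, sInf_log_sum_mul_rpow_eq hα0 hα1 hA ⟨y0, hAy0⟩,
    sInf_log_sum_sum_mul_rpow_eq (C := fun y x => pt x * W x y) (one_div_pos.mpr hα0)
      (by simpa [eq_comm] using hα1) (fun y x => mul_nonneg (hpt0 x).le (hW x y))
      ⟨y0, x0, mul_pos (hpt0 x0) hy0⟩,
    sum_rpow_sum_tilted_mul_rpow hα0 (fun x => (hp x).le) hW hT hpt, log_rpow hM,
    log_div hM.ne' hT.ne']
  field_simp
  ring

/-- Sibson mutual information of order `α` equals the Rényi entropy of order `1/α` of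
`X` minus the Sibson conditional entropy of order `α` of `X` given `Y`. -/
theorem sibson_mi_eq_renyi_sub_sibson_cond_entropy
    {X Y : Type*} [Fintype X] [Fintype Y] [Nonempty X] [Nonempty Y]
    (α : ℝ) (hα0 : 0 < α) (hα1 : α ≠ 1)
    (p : X → ℝ) (hp : ∀ x, 0 < p x) (hp1 : (∑ x, p x) = 1)
    (W : X → Y → ℝ) (hW : ∀ x y, 0 ≤ W x y) (hW1 : ∀ x, (∑ y, W x y) = 1)
    (pt : X → ℝ) (hpt : ∀ x, pt x = p x ^ (1 / α) / ∑ x', p x' ^ (1 / α)) :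
    sInf {v : ℝ | ∃ q : Y → ℝ, (∀ y, 0 < q y) ∧ (∑ y, q y) = 1 ∧
        v = (1 / (α - 1)) * Real.log (∑ z : X × Y, p z.1 * W z.1 z.2 ^ α * q z.2 ^ (1 - α))}
      = (1 / (1 - 1 / α)) * Real.log (∑ x, p x ^ (1 / α))
        - sInf {v : ℝ | ∃ r : Y → X → ℝ, (∀ y x, 0 < r y x) ∧ (∀ y, (∑ x, r y x) = 1) ∧
            v = (α / (1 - α)) * Real.log
                  (∑ z : X × Y, pt z.1 * W z.1 z.2 * r z.2 z.1 ^ (1 - 1 / α))} :=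
  sibson_mi_eq_renyi_sub_sibson_cond_entropy_general α hα0 hα1 p hp W hW hW1 pt hpt
end

section
/- Generalized g-leakage representation of Sibson mutual information: let X and Y be finite nonempty sets, let α ∈ (0,1) ∪ (1,∞), let p be a strictly positive probability distribution on X, and let W be a channel from X to Y. Let p̃(x) = p(x)^{1/α} / ∑_{x'} p(x')^{1/α}. Then inf over strictly positive probability distributions q on Y of (1/(α−1)) · log ∑_{x,y} p(x) · W(y|x)^α · q(y)^{1−α} = log( sup over strictly positive families r_{X|Y} of (∑_{x,y} p̃(x) · W(y|x) · r(x|y)^{(α−1)/α})^{α/(α−1)} ) − log( sup over strictly positive probability distributions r₀ on X of (∑_x p̃(x) · r₀(x)^{(α−1)/α})^{α/(α−1)} ); that is, the Sibson mutual information of order α equals the generalized multiplicative g-leakage for the Kolmogorov–Nagumo function ln_{1/α}, the soft 0-1 score, and the (1/α)-tilted prior. -/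
/-!
Write `a q^(1-s) = q (a^(1/s) / q)^s`. Jensen's inequality for `t ↦ t^s` under the weights `q`
gives `∑ a q^(1-s) ≤ (∑ a^(1/s))^s` for `s ≤ 1` and the reverse inequality for `s ≥ 1`, and the
bound is approached by strictly positive `q` tending to `a^(1/s) / ∑ a^(1/s)`. With `s = α` this
evaluates Sibson's infimum as `α/(α-1) · log ∑_y (∑_x p(x) W(y|x)^α)^(1/α)`. With `s = 1/α`,
applied to each row `r(·|y)` separately, it evaluates both suprema; for the tilted prior
`p̃ ∝ p^(1/α)` the two values are `(T/Z)^(α/(α-1))` and `(1/Z)^(α/(α-1))`, with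
`T = ∑_y (∑_x p(x) W(y|x)^α)^(1/α)` and `Z = ∑_x p(x)^(1/α)`, so `Z` cancels in the difference
of logarithms.
-/

open Real Finset Filter Topology

section

variable {α : Type*} [ConditionallyCompleteLinearOrder α] [TopologicalSpace α] [OrderTopology α]
  {S : Set α} {K : α} {u : ℕ → α}

lemma csInf_eq_of_mem_lowerBounds_of_tendsto (hK : K ∈ lowerBounds S) (hu : ∀ n, u n ∈ S)
    (hlim : Tendsto u atTop (𝓝 K)) : sInf S = K :=
  (isGLB_of_mem_closure hK (mem_closure_of_tendsto hlim (.of_forall hu))).csInf_eq ⟨u 0, hu 0⟩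

lemma csSup_eq_of_mem_upperBounds_of_tendsto (hK : K ∈ upperBounds S) (hu : ∀ n, u n ∈ S)
    (hlim : Tendsto u atTop (𝓝 K)) : sSup S = K :=
  (isLUB_of_mem_closure hK (mem_closure_of_tendsto hlim (.of_forall hu))).csSup_eq ⟨u 0, hu 0⟩

end

lemma mul_rpow_one_sub_eq {a q s : ℝ} (ha : 0 ≤ a) (hq : 0 < q) (hs : s ≠ 0) :
    a * q ^ (1 - s) = q * (a ^ s⁻¹ / q) ^ s := by
  rw [div_rpow (rpow_nonneg ha _) hq.le, rpow_inv_rpow ha hs, rpow_sub hq, rpow_one]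
  field_simp

section PowerMean

variable {Z : Type*} [Fintype Z] {a q : Z → ℝ} {s : ℝ}

lemma sum_mul_rpow_one_sub_le (ha : ∀ z, 0 ≤ a z) (hq : ∀ z, 0 < q z) (hq1 : ∑ z, q z = 1)
    (hs0 : 0 < s) (hs1 : s ≤ 1) :
    ∑ z, a z * q z ^ (1 - s) ≤ (∑ z, a z ^ s⁻¹) ^ s := by
  have jensen := (concaveOn_rpow hs0.le hs1).le_map_sum (t := univ) (w := q)
    (p := fun z => a z ^ s⁻¹ / q z) (fun z _ => (hq z).le) hq1
    (fun z _ => Set.mem_Ici.2 (div_nonneg (rpow_nonneg (ha z) _) (hq z).le))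
  simp only [smul_eq_mul, mul_div_cancel₀ _ (hq _).ne'] at jensen
  simpa only [mul_rpow_one_sub_eq (ha _) (hq _) hs0.ne'] using jensen

lemma le_sum_mul_rpow_one_sub (ha : ∀ z, 0 ≤ a z) (hq : ∀ z, 0 < q z) (hq1 : ∑ z, q z = 1)
    (hs1 : 1 ≤ s) :
    (∑ z, a z ^ s⁻¹) ^ s ≤ ∑ z, a z * q z ^ (1 - s) := by
  have jensen := (convexOn_rpow hs1).map_sum_le (t := univ) (w := q)
    (p := fun z => a z ^ s⁻¹ / q z) (fun z _ => (hq z).le) hq1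
    (fun z _ => Set.mem_Ici.2 (div_nonneg (rpow_nonneg (ha z) _) (hq z).le))
  simp only [smul_eq_mul, mul_div_cancel₀ _ (hq _).ne'] at jensen
  simpa only [mul_rpow_one_sub_eq (ha _) (hq _) (by linarith : s ≠ 0)] using jensen

lemma sum_mul_rpow_one_sub_of_normalized_rpow (ha : ∀ z, 0 ≤ a z) (hs : 0 < s) :
    ∑ z, a z * ((a z ^ s⁻¹) / ∑ z', a z' ^ s⁻¹) ^ (1 - s) = (∑ z, a z ^ s⁻¹) ^ s := by
  set S := ∑ z', a z' ^ s⁻¹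
  have hS : 0 ≤ S := sum_nonneg fun z _ => rpow_nonneg (ha z) _
  have hterm : ∀ z, a z * (a z ^ s⁻¹ / S) ^ (1 - s) = a z ^ s⁻¹ / S ^ (1 - s) := by
    intro z
    rw [div_rpow (rpow_nonneg (ha z) _) hS, ← mul_div_assoc]
    rcases (ha z).eq_or_lt with hz | hz
    · simp [← hz, hs.ne']
    · rw [mul_rpow_one_sub_eq (ha z) (rpow_pos_of_pos hz _) hs.ne',
        div_self (rpow_pos_of_pos hz _).ne', one_rpow, mul_one]
  simp only [hterm, ← sum_div]
  calc
    S / S ^ (1 - s) = S ^ (1 - (1 - s)) := by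
      rw [rpow_sub' (y := 1) (z := 1 - s) hS (by simpa using hs.ne'), rpow_one]
    _ = S ^ s := by rw [sub_sub_cancel]

lemma exists_tendsto_sum_mul_rpow_one_sub [Nonempty Z] (ha : ∀ z, 0 ≤ a z) (hs : 0 < s) :
    ∃ q : ℕ → Z → ℝ, (∀ n, (∀ z, 0 < q n z) ∧ ∑ z, q n z = 1) ∧
      Tendsto (fun n => ∑ z, a z * q n z ^ (1 - s)) atTop (𝓝 ((∑ z, a z ^ s⁻¹) ^ s)) := by
  set S := ∑ z, a z ^ s⁻¹
  set N : ℝ := (Fintype.card Z : ℝ)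
  have hN : 0 < N := by simpa [N] using Fintype.card_pos
  have hS : 0 ≤ S := sum_nonneg fun z _ => rpow_nonneg (ha z) _
  set ε : ℕ → ℝ := fun n => 1 / (n + 1)
  have hε : ∀ n, 0 < ε n := fun n => by positivity
  -- The optimizer `a^(1/s) / S` may have zero entries; adding `ε` to every entry keeps `q` positive.
  refine ⟨fun n z => (a z ^ s⁻¹ + ε n) / (S + N * ε n), fun n => ⟨fun z => ?_, ?_⟩, ?_⟩
  · have := hε n
    have := rpow_nonneg (ha z) s⁻¹
    positivity
  · have := hε n
    rw [← sum_div, sum_add_distrib, sum_const, card_univ, nsmul_eq_mul, div_self (by positivity)]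
  · rw [← sum_mul_rpow_one_sub_of_normalized_rpow ha hs]
    refine tendsto_finsetSum _ fun z _ => ?_
    rcases (ha z).eq_or_lt with hz | hz
    · simp [← hz]
    have hbz : 0 < a z ^ s⁻¹ := rpow_pos_of_pos hz _
    have hSpos : 0 < S :=
      hbz.trans_le (single_le_sum (fun z _ => rpow_nonneg (ha z) _) (mem_univ z))
    have hεlim : Tendsto ε atTop (𝓝 0) := tendsto_one_div_add_atTop_nhds_zero_nat
    have hq :
        Tendsto (fun n => (a z ^ s⁻¹ + ε n) / (S + N * ε n)) atTop (𝓝 (a z ^ s⁻¹ / S)) := by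
      have hnum : Tendsto (fun n => a z ^ s⁻¹ + ε n) atTop (𝓝 (a z ^ s⁻¹)) := by
        simpa using tendsto_const_nhds.add hεlim
      have hden : Tendsto (fun n => S + N * ε n) atTop (𝓝 S) := by
        simpa using tendsto_const_nhds.add (hεlim.const_mul N)
      exact hnum.div hden hSpos.ne'
    exact (hq.rpow_const (Or.inl (div_pos hbz hSpos).ne')).const_mul _

end PowerMean

lemma sum_rpow_sum_pos {X Y : Type*} [Fintype X] [Fintype Y] {a : X → Y → ℝ}
    (ha : ∀ x y, 0 ≤ a x y) (hpos : ∃ x y, 0 < a x y) (t : ℝ) : 0 < ∑ y, (∑ x, a x y) ^ t := by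
  obtain ⟨x₀, y₀, hxy₀⟩ := hpos
  exact sum_pos' (fun y _ => rpow_nonneg (sum_nonneg fun x _ => ha x y) _)
    ⟨y₀, mem_univ y₀, rpow_pos_of_pos (sum_pos' (fun x _ => ha x y₀) ⟨x₀, mem_univ x₀, hxy₀⟩) _⟩

lemma sInf_log_sum_mul_rpow_one_sub {X Y : Type*} [Fintype X] [Fintype Y]
    (a : X → Y → ℝ) (ha : ∀ x y, 0 ≤ a x y) (hpos : ∃ x y, 0 < a x y)
    {α : ℝ} (hα0 : 0 < α) (hα1 : α ≠ 1) :
    sInf {v : ℝ | ∃ q : Y → ℝ, (∀ y, 0 < q y) ∧ ∑ y, q y = 1 ∧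
        v = 1 / (α - 1) * log (∑ z : X × Y, a z.1 z.2 * q z.2 ^ (1 - α))}
      = α / (α - 1) * log (∑ y, (∑ x, a x y) ^ α⁻¹) := by
  set A : Y → ℝ := fun y => ∑ x, a x y
  have hA : ∀ y, 0 ≤ A y := fun y => sum_nonneg fun x _ => ha x y
  have hS : 0 < ∑ y, A y ^ α⁻¹ := sum_rpow_sum_pos ha hpos _
  obtain ⟨x₀, y₀, hxy₀⟩ := hpos
  have : Nonempty Y := ⟨y₀⟩
  have hAy₀ : 0 < A y₀ := hxy₀.trans_le (single_le_sum (fun x _ => ha x y₀) (mem_univ x₀))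
  have hsum : ∀ q : Y → ℝ,
      ∑ z : X × Y, a z.1 z.2 * q z.2 ^ (1 - α) = ∑ y, A y * q y ^ (1 - α) := fun q => by
    simp only [Fintype.sum_prod_type, A, sum_mul]
    exact sum_comm
  have hT : 0 < (∑ y, A y ^ α⁻¹) ^ α := rpow_pos_of_pos hS _
  have hvalue :
      α / (α - 1) * log (∑ y, A y ^ α⁻¹) = 1 / (α - 1) * log ((∑ y, A y ^ α⁻¹) ^ α) := by
    rw [log_rpow hS]
    ring
  obtain ⟨q, hq, hlim⟩ := exists_tendsto_sum_mul_rpow_one_sub hA hα0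
  refine hvalue ▸ csInf_eq_of_mem_lowerBounds_of_tendsto ?_
    (fun n => ⟨q n, (hq n).1, (hq n).2, by rw [hsum]⟩) ((hlim.log hT.ne').const_mul _)
  rintro v ⟨q, hq, hq1, rfl⟩
  rw [hsum]
  rcases hα1.lt_or_gt with hlt | hgt
  · have hF : 0 < ∑ y, A y * q y ^ (1 - α) :=
      sum_pos' (fun y _ => mul_nonneg (hA y) (rpow_nonneg (hq y).le _))
        ⟨y₀, mem_univ y₀, mul_pos hAy₀ (rpow_pos_of_pos (hq y₀) _)⟩
    exact mul_le_mul_of_nonpos_left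
      (log_le_log hF (sum_mul_rpow_one_sub_le hA hq hq1 hα0 hlt.le)) (one_div_nonpos.2 (by linarith))
  · exact mul_le_mul_of_nonneg_left (log_le_log hT (le_sum_mul_rpow_one_sub hA hq hq1 hgt.le))
      (one_div_nonneg.2 (by linarith))

lemma sSup_rpow_sum_sum_mul_rpow {X Y : Type*} [Fintype X] [Fintype Y]
    (a : X → Y → ℝ) (ha : ∀ x y, 0 ≤ a x y) (hpos : ∃ x y, 0 < a x y)
    {α : ℝ} (hα0 : 0 < α) (hα1 : α ≠ 1) :
    sSup {v : ℝ | ∃ r : Y → X → ℝ, (∀ y x, 0 < r y x) ∧ (∀ y, ∑ x, r y x = 1) ∧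
        v = (∑ z : X × Y, a z.1 z.2 * r z.2 z.1 ^ ((α - 1) / α)) ^ (α / (α - 1))}
      = (∑ y, (∑ x, a x y ^ α) ^ α⁻¹) ^ (α / (α - 1)) := by
  have hγ : (α - 1) / α = 1 - α⁻¹ := by field_simp
  have hαinv : α = α⁻¹⁻¹ := (inv_inv α).symm
  set K := ∑ y, (∑ x, a x y ^ α) ^ α⁻¹
  obtain ⟨x₀, y₀, hxy₀⟩ := hpos
  have : Nonempty X := ⟨x₀⟩
  have hK : 0 < K :=
    sum_rpow_sum_pos (fun x y => rpow_nonneg (ha x y) α) ⟨x₀, y₀, rpow_pos_of_pos hxy₀ α⟩ _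
  have hsum : ∀ r : Y → X → ℝ, ∑ z : X × Y, a z.1 z.2 * r z.2 z.1 ^ (1 - α⁻¹)
      = ∑ y, ∑ x, a x y * r y x ^ (1 - α⁻¹) := fun r => by
    rw [Fintype.sum_prod_type, sum_comm]
  simp only [hγ]
  choose q hq hlim using fun y => exists_tendsto_sum_mul_rpow_one_sub (ha · y) (inv_pos.2 hα0)
  simp only [← hαinv] at hlim
  refine csSup_eq_of_mem_upperBounds_of_tendsto ?_
    (fun n => ⟨fun y => q y n, fun y => (hq y n).1, fun y => (hq y n).2,
      by rw [hsum (fun y => q y n)]⟩)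
    ((tendsto_finsetSum _ fun y _ => hlim y).rpow_const (Or.inl hK.ne'))
  rintro v ⟨r, hr, hr1, rfl⟩
  rw [hsum]
  rcases hα1.lt_or_gt with hlt | hgt
  · have hle : K ≤ ∑ y, ∑ x, a x y * r y x ^ (1 - α⁻¹) := sum_le_sum fun y _ => by
      simpa only [← hαinv] using le_sum_mul_rpow_one_sub (ha · y) (hr y) (hr1 y)
        (one_le_inv₀ hα0 |>.2 hlt.le)
    exact rpow_le_rpow_of_nonpos hK hle (div_nonpos_of_nonneg_of_nonpos hα0.le (by linarith))
  · have hle : ∑ y, ∑ x, a x y * r y x ^ (1 - α⁻¹) ≤ K := sum_le_sum fun y _ => by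
      simpa only [← hαinv] using sum_mul_rpow_one_sub_le (ha · y) (hr y) (hr1 y) (inv_pos.2 hα0)
        (inv_le_one_of_one_le₀ hgt.le)
    exact rpow_le_rpow (sum_nonneg fun y _ => sum_nonneg fun x _ =>
      mul_nonneg (ha x y) (rpow_nonneg (hr y x).le _)) hle (div_nonneg hα0.le (by linarith))

lemma sSup_rpow_sum_mul_rpow {X : Type*} [Fintype X]
    (a : X → ℝ) (ha : ∀ x, 0 ≤ a x) (hpos : ∃ x, 0 < a x) {α : ℝ} (hα0 : 0 < α) (hα1 : α ≠ 1) :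
    sSup {v : ℝ | ∃ r : X → ℝ, (∀ x, 0 < r x) ∧ ∑ x, r x = 1 ∧
        v = (∑ x, a x * r x ^ ((α - 1) / α)) ^ (α / (α - 1))}
      = ((∑ x, a x ^ α) ^ α⁻¹) ^ (α / (α - 1)) := by
  obtain ⟨x₀, hx₀⟩ := hpos
  have h := sSup_rpow_sum_sum_mul_rpow (fun x (_ : Unit) => a x) (fun x _ => ha x)
    ⟨x₀, (), hx₀⟩ hα0 hα1
  rw [Fintype.sum_unique] at h
  rw [← h]
  congr 1
  ext v
  constructor
  · rintro ⟨r, hr, hr1, rfl⟩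
    exact ⟨fun _ => r, fun _ => hr, fun _ => hr1, by simp [Fintype.sum_prod_type]⟩
  · rintro ⟨r, hr, hr1, rfl⟩
    exact ⟨r (), hr (), hr1 (), by simp [Fintype.sum_prod_type]⟩

lemma sum_tilted_mul_rpow_rpow_inv {X : Type*} [Fintype X] {α : ℝ} (hα : α ≠ 0) {p b : X → ℝ}
    (hp : ∀ x, 0 ≤ p x) (hb : ∀ x, 0 ≤ b x) (hZ : 0 < ∑ x, p x ^ α⁻¹) :
    (∑ x, (p x ^ α⁻¹ / (∑ x', p x' ^ α⁻¹) * b x) ^ α) ^ α⁻¹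
      = (∑ x, p x * b x ^ α) ^ α⁻¹ / ∑ x, p x ^ α⁻¹ := by
  have hterm : ∀ x, (p x ^ α⁻¹ / (∑ x', p x' ^ α⁻¹) * b x) ^ α
      = p x * b x ^ α / (∑ x', p x' ^ α⁻¹) ^ α := fun x => by
    rw [mul_rpow (div_nonneg (rpow_nonneg (hp x) _) hZ.le) (hb x),
      div_rpow (rpow_nonneg (hp x) _) hZ.le, rpow_inv_rpow (hp x) hα, div_mul_eq_mul_div]
  rw [sum_congr rfl fun x _ => hterm x, ← sum_div,
    div_rpow (sum_nonneg fun x _ => mul_nonneg (hp x) (rpow_nonneg (hb x) _))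
      (rpow_nonneg hZ.le _), rpow_rpow_inv hZ.le hα]

theorem sibson_mi_eq_generalized_leakage_general
    {X Y : Type*} [Fintype X] [Fintype Y]
    (α : ℝ) (hα0 : 0 < α) (hα1 : α ≠ 1)
    (p : X → ℝ) (hp : ∀ x, 0 < p x) (hp1 : (∑ x, p x) = 1)
    (W : X → Y → ℝ) (hW : ∀ x y, 0 ≤ W x y) (hW1 : ∀ x, (∑ y, W x y) = 1)
    (pt : X → ℝ) (hpt : ∀ x, pt x = p x ^ (1 / α) / ∑ x', p x' ^ (1 / α)) :
    sInf {v : ℝ | ∃ q : Y → ℝ, (∀ y, 0 < q y) ∧ (∑ y, q y) = 1 ∧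
        v = (1 / (α - 1)) * Real.log (∑ z : X × Y, p z.1 * W z.1 z.2 ^ α * q z.2 ^ (1 - α))}
    = Real.log (sSup {v : ℝ | ∃ r : Y → X → ℝ,
          (∀ y x, 0 < r y x) ∧ (∀ y, (∑ x, r y x) = 1) ∧
          v = (∑ z : X × Y, pt z.1 * W z.1 z.2 * r z.2 z.1 ^ ((α - 1) / α)) ^ (α / (α - 1))})
      - Real.log (sSup {v : ℝ | ∃ r₀ : X → ℝ,
          (∀ x, 0 < r₀ x) ∧ (∑ x, r₀ x) = 1 ∧
          v = (∑ x, pt x * r₀ x ^ ((α - 1) / α)) ^ (α / (α - 1))}) := by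
  obtain ⟨x₀, -, -⟩ := exists_lt_of_sum_lt (s := univ) (f := fun _ => 0) (g := p) (by simp [hp1])
  obtain ⟨y₀, -, hy₀⟩ := exists_lt_of_sum_lt (s := univ) (f := fun _ => 0) (g := W x₀)
    (by simp [hW1])
  simp only [one_div] at hpt
  have hZ : 0 < ∑ x, p x ^ α⁻¹ := sum_pos (fun x _ => rpow_pos_of_pos (hp x) _) ⟨x₀, mem_univ _⟩
  have hpt0 : ∀ x, 0 < pt x := fun x => hpt x ▸ div_pos (rpow_pos_of_pos (hp x) _) hZ
  obtain rfl : pt = fun x => p x ^ α⁻¹ / ∑ x', p x' ^ α⁻¹ := funext hpt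
  have hpW : ∀ x y, 0 ≤ p x * W x y ^ α := fun x y => mul_nonneg (hp x).le (rpow_nonneg (hW x y) _)
  have hpW₀ : 0 < p x₀ * W x₀ y₀ ^ α := mul_pos (hp x₀) (rpow_pos_of_pos hy₀ _)
  rw [sInf_log_sum_mul_rpow_one_sub _ hpW ⟨x₀, y₀, hpW₀⟩ hα0 hα1,
    sSup_rpow_sum_sum_mul_rpow _ (fun x y => mul_nonneg (hpt0 x).le (hW x y))
      ⟨x₀, y₀, mul_pos (hpt0 x₀) hy₀⟩ hα0 hα1,
    sSup_rpow_sum_mul_rpow _ (fun x => (hpt0 x).le) ⟨x₀, hpt0 x₀⟩ hα0 hα1]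
  have hT := sum_rpow_sum_pos hpW ⟨x₀, y₀, hpW₀⟩ α⁻¹
  have hK2 := fun y => sum_tilted_mul_rpow_rpow_inv hα0.ne' (fun x => (hp x).le) (hW · y) hZ
  have hK3 := sum_tilted_mul_rpow_rpow_inv hα0.ne' (fun x => (hp x).le) (fun _ => zero_le_one) hZ
  simp only [mul_one, one_rpow, hp1] at hK3
  simp only [hK2, hK3, ← sum_div]
  rw [log_rpow (div_pos hT hZ), log_rpow (div_pos one_pos hZ), log_div hT.ne' hZ.ne',
    log_div one_ne_zero hZ.ne', log_one]
  ring

/-- Generalized g-leakage representation of Sibson mutual information: the Sibson MI of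
order `α` equals the generalized multiplicative g-leakage for the KN function
`ln_{1/α}`, the soft 0-1 score, and the `(1/α)`-tilted prior. -/
theorem sibson_mi_eq_generalized_leakage
    {X Y : Type*} [Fintype X] [Fintype Y] [Nonempty X] [Nonempty Y]
    (α : ℝ) (hα0 : 0 < α) (hα1 : α ≠ 1)
    (p : X → ℝ) (hp : ∀ x, 0 < p x) (hp1 : (∑ x, p x) = 1)
    (W : X → Y → ℝ) (hW : ∀ x y, 0 ≤ W x y) (hW1 : ∀ x, (∑ y, W x y) = 1)
    (pt : X → ℝ) (hpt : ∀ x, pt x = p x ^ (1 / α) / ∑ x', p x' ^ (1 / α)) :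
    sInf {v : ℝ | ∃ q : Y → ℝ, (∀ y, 0 < q y) ∧ (∑ y, q y) = 1 ∧
        v = (1 / (α - 1)) * Real.log (∑ z : X × Y, p z.1 * W z.1 z.2 ^ α * q z.2 ^ (1 - α))}
    = Real.log (sSup {v : ℝ | ∃ r : Y → X → ℝ,
          (∀ y x, 0 < r y x) ∧ (∀ y, (∑ x, r y x) = 1) ∧
          v = (∑ z : X × Y, pt z.1 * W z.1 z.2 * r z.2 z.1 ^ ((α - 1) / α)) ^ (α / (α - 1))})
      - Real.log (sSup {v : ℝ | ∃ r₀ : X → ℝ,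
          (∀ x, 0 < r₀ x) ∧ (∑ x, r₀ x) = 1 ∧
          v = (∑ x, pt x * r₀ x ^ ((α - 1) / α)) ^ (α / (α - 1))}) :=
  sibson_mi_eq_generalized_leakage_general α hα0 hα1 p hp hp1 W hW hW1 pt hpt
end
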